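/- arXiv:1608.04043 — 3 statements merged into one kernel-verified Lean document; each statement's English description precedes it below -/
import Mathlib

section
/- Key Hamiltonian estimate: let H ∈ ℋ(m, Λ, (a_r), (M_r)) be of the form H(x,p) = inf_{i∈I} H_i(x,p) for all (x,p), where each H_i ∈ 𝔅(m_i, Λ, (a_r), (M_r)) with m_i > 1. Fix η ∈ (0,1/8) and R_η > 1, and let (x_ε)_{ε∈(0,1)}, (y_ε)_{ε∈(0,1)}, (q_ε)_{ε∈(0,1)} be families in ℝ^d with |x_ε| ≤ R_η − 1, |y_ε| ≤ R_η − 1, |q_ε| ≤ η for every ε ∈ (0,1), and |x_ε − y_ε| → 0 as ε → 0⁺. Then there exist ε(η) > 0, C > 0 and a constant C_η > 0, depending on η, such that for every ε < ε(η), with s := 1 − 4η and p_ε := (x_ε − y_ε)/ε, one has s·H(x_ε, (p_ε + q_ε)/s) − H(y_ε, p_ε) ≥ −C(1 − s) − C_η|x_ε − y_ε|. -/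
open Set Metric Filter
open scoped ENNReal NNReal RealInnerProductSpace

noncomputable section

abbrev Euc (d : ℕ) := EuclideanSpace ℝ (Fin d)

/-- Time partial derivative `∂_t u (t,x)`. -/
def timeDeriv (d : ℕ) (u : ℝ × Euc d → ℝ) (t : ℝ) (x : Euc d) : ℝ :=
  deriv (fun s => u (s, x)) t

/-- Spatial partial derivative `∂_{x_i} u (t,x)`. -/
def spacePartial (d : ℕ) (i : Fin d) (u : ℝ × Euc d → ℝ) (t : ℝ) (x : Euc d) : ℝ :=
  fderiv ℝ (fun y => u (t, y)) x (EuclideanSpace.single i 1)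

/-- Spatial gradient `D_x u (t,x)`. -/
def spaceGrad (d : ℕ) (u : ℝ × Euc d → ℝ) (t : ℝ) (x : Euc d) : Euc d :=
  (EuclideanSpace.equiv (Fin d) ℝ).symm (fun i => spacePartial d i u t x)

/-- Spatial Hessian matrix `D_x² u (t,x)`. -/
def spaceHessian (d : ℕ) (u : ℝ × Euc d → ℝ) (t : ℝ) (x : Euc d) :
    Matrix (Fin d) (Fin d) ℝ :=
  Matrix.of fun i j => spacePartial d i (fun p => spacePartial d j u p.1 p.2) t x

/-- The quasilinear parabolic operator `∂_t u - tr(A(x) D_x² u) + H(x, D_x u)`. -/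
def parabolicOp (d : ℕ) (A : Euc d → Matrix (Fin d) (Fin d) ℝ) (H : Euc d → Euc d → ℝ)
    (u : ℝ × Euc d → ℝ) (t : ℝ) (x : Euc d) : ℝ :=
  timeDeriv d u t x - Matrix.trace (A x * spaceHessian d u t x) + H x (spaceGrad d u t x)

/-- Viscosity subsolution of `∂_t u - tr(A(x) D_x² u) + H(x, D_x u) = 0` in `(0,T) × U`. -/
def IsViscSubsolution (d : ℕ) (A : Euc d → Matrix (Fin d) (Fin d) ℝ)
    (H : Euc d → Euc d → ℝ) (T : ℝ) (U : Set (Euc d)) (v : ℝ × Euc d → ℝ) : Prop :=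
  ∀ φ : ℝ × Euc d → ℝ, ContDiff ℝ 2 φ → ∀ t₀ ∈ Ioo (0 : ℝ) T, ∀ x₀ ∈ U,
    IsLocalMaxOn (fun p => v p - φ p) (Ioo 0 T ×ˢ U) (t₀, x₀) →
    parabolicOp d A H φ t₀ x₀ ≤ 0

/-- Viscosity supersolution of `∂_t u - tr(A(x) D_x² u) + H(x, D_x u) = 0` in `(0,T) × U`. -/
def IsViscSupersolution (d : ℕ) (A : Euc d → Matrix (Fin d) (Fin d) ℝ)
    (H : Euc d → Euc d → ℝ) (T : ℝ) (U : Set (Euc d)) (w : ℝ × Euc d → ℝ) : Prop :=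
  ∀ φ : ℝ × Euc d → ℝ, ContDiff ℝ 2 φ → ∀ t₀ ∈ Ioo (0 : ℝ) T, ∀ x₀ ∈ U,
    IsLocalMinOn (fun p => w p - φ p) (Ioo 0 T ×ˢ U) (t₀, x₀) →
    0 ≤ parabolicOp d A H φ t₀ x₀

/-- Frobenius norm of a real matrix. -/
def matFrobNorm {k l : ℕ} (Mm : Matrix (Fin k) (Fin l) ℝ) : ℝ :=
  Real.sqrt (∑ i, ∑ j, (Mm i j) ^ 2)

/-- Conditions (A1)–(A2): `A = σ σᵀ` with `σ` bounded and Lipschitz with constant `Λ_A`. -/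
def CondA (d : ℕ) (ΛA : ℝ) (A : Euc d → Matrix (Fin d) (Fin d) ℝ) : Prop :=
  ∃ n : ℕ, ∃ σ : Euc d → Matrix (Fin d) (Fin n) ℝ,
    (∀ x, A x = σ x * (σ x).transpose) ∧
    (∀ x, matFrobNorm (σ x) ≤ ΛA) ∧
    (∀ x y, matFrobNorm (σ x - σ y) ≤ ΛA * ‖x - y‖)

/-- Condition (A3): entries of `A` are `C¹`. -/
def CondA3 (d : ℕ) (A : Euc d → Matrix (Fin d) (Fin d) ℝ) : Prop :=
  ∀ i j, ContDiff ℝ 1 (fun x : Euc d => A x i j)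

/-- Condition (A4): uniform ellipticity `⟨A(x)ξ, ξ⟩ ≥ λ|ξ|²`. -/
def CondA4 (d : ℕ) (lam : ℝ) (A : Euc d → Matrix (Fin d) (Fin d) ℝ) : Prop :=
  ∀ x ξ : Euc d, lam * ‖ξ‖ ^ 2 ≤ ∑ i, ∑ j, A x i j * ξ j * ξ i

/-- Condition (H3). -/
def CondH3 (d : ℕ) (m Λ : ℝ) (H : Euc d → Euc d → ℝ) : Prop :=
  ∀ x p q : Euc d, |H x p - H x q| ≤ Λ * (‖p‖ + ‖q‖ + 1) ^ (m - 1) * ‖p - q‖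

/-- Condition (H4) with parameter `μ`. -/
def CondH4 (d : ℕ) (m Λ μ : ℝ) (a M : ℝ → ℝ) (H : Euc d → Euc d → ℝ) : Prop :=
  ∀ r : ℝ, 0 < r →
    (a r ∈ Ioc (0 : ℝ) 1 ∧ 1 ≤ M r) ∧
    (∀ x ∈ ball (0 : Euc d) r, ∀ p : Euc d,
      max (-μ) (a r * ‖p‖ ^ m - M r) ≤ H x p ∧ H x p ≤ Λ * (‖p‖ ^ m + 1)) ∧
    (∀ x ∈ ball (0 : Euc d) r, ∀ y ∈ ball (0 : Euc d) r, ∀ p : Euc d,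
      |H x p - H y p| ≤ (Λ * ‖p‖ ^ m + M r) * ‖x - y‖)

/-- Condition (H4) with `μ = +∞`. -/
def CondH4top (d : ℕ) (m Λ : ℝ) (a M : ℝ → ℝ) (H : Euc d → Euc d → ℝ) : Prop :=
  ∀ r : ℝ, 0 < r →
    (a r ∈ Ioc (0 : ℝ) 1 ∧ 1 ≤ M r) ∧
    (∀ x ∈ ball (0 : Euc d) r, ∀ p : Euc d,
      a r * ‖p‖ ^ m - M r ≤ H x p ∧ H x p ≤ Λ * (‖p‖ ^ m + 1)) ∧
    (∀ x ∈ ball (0 : Euc d) r, ∀ y ∈ ball (0 : Euc d) r, ∀ p : Euc d,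
      |H x p - H y p| ≤ (Λ * ‖p‖ ^ m + M r) * ‖x - y‖)

/-- `limsup_{|x|→∞, x∈U} sup_{t∈[0,T]} v(t,x)/(1+|x|) ≤ 0`. -/
def SublinearAbove (d : ℕ) (T : ℝ) (U : Set (Euc d)) (v : ℝ × Euc d → ℝ) : Prop :=
  ∀ ε : ℝ, 0 < ε → ∃ R : ℝ, ∀ x ∈ U, R ≤ ‖x‖ → ∀ t ∈ Icc (0 : ℝ) T, v (t, x) ≤ ε * (1 + ‖x‖)

/-- `liminf_{|x|→∞, x∈U} inf_{t∈[0,T]} w(t,x)/(1+|x|) ≥ 0`. -/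
def SublinearBelow (d : ℕ) (T : ℝ) (U : Set (Euc d)) (w : ℝ × Euc d → ℝ) : Prop :=
  ∀ ε : ℝ, 0 < ε → ∃ R : ℝ, ∀ x ∈ U, R ≤ ‖x‖ → ∀ t ∈ Icc (0 : ℝ) T, -(ε * (1 + ‖x‖)) ≤ w (t, x)

/-- Parabolic boundary `({0} × U) ∪ ([0,T) × ∂U)`. -/
def parabolicBoundary (d : ℕ) (T : ℝ) (U : Set (Euc d)) : Set (ℝ × Euc d) :=
  ({0} ×ˢ U) ∪ (Ico 0 T ×ˢ frontier U)

/-- The families `(a_r)_{r>0} ⊆ (0,1]` and `(M_r)_{r>0} ⊆ [1,+∞)`. -/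
def GoodFamilies (a M : ℝ → ℝ) : Prop :=
  ∀ r : ℝ, 0 < r → a r ∈ Ioc (0 : ℝ) 1 ∧ 1 ≤ M r

/-- The class `𝔅(m, Λ, (a_r), (M_r))`: Borel functions `F(x,p)`, convex in `p`,
satisfying (H3) and the growth condition `a_r|p|^m - M_r ≤ F(x,p) ≤ Λ(|p|^m + 1)`
for `x ∈ B_r`. -/
def MemB (d : ℕ) (m Λ : ℝ) (a M : ℝ → ℝ) (F : Euc d → Euc d → ℝ) : Prop :=
  Measurable (fun q : Euc d × Euc d => F q.1 q.2) ∧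
  (∀ x : Euc d, ConvexOn ℝ univ (F x)) ∧
  (∀ x p q : Euc d, |F x p - F x q| ≤ Λ * (‖p‖ + ‖q‖ + 1) ^ (m - 1) * ‖p - q‖) ∧
  (∀ r : ℝ, 0 < r → ∀ x ∈ ball (0 : Euc d) r, ∀ p : Euc d,
    a r * ‖p‖ ^ m - M r ≤ F x p ∧ F x p ≤ Λ * (‖p‖ ^ m + 1))

/-- The class `ℋ(m, Λ, (a_r), (M_r))`: Hamiltonians satisfying (H3) and (H4) with
`μ = +∞`. -/
def MemH (d : ℕ) (m Λ : ℝ) (a M : ℝ → ℝ) (H : Euc d → Euc d → ℝ) : Prop :=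
  (∀ x p q : Euc d, |H x p - H x q| ≤ Λ * (‖p‖ + ‖q‖ + 1) ^ (m - 1) * ‖p - q‖) ∧
  (∀ r : ℝ, 0 < r →
    (∀ x ∈ ball (0 : Euc d) r, ∀ p : Euc d,
      a r * ‖p‖ ^ m - M r ≤ H x p ∧ H x p ≤ Λ * (‖p‖ ^ m + 1)) ∧
    (∀ x ∈ ball (0 : Euc d) r, ∀ y ∈ ball (0 : Euc d) r, ∀ p : Euc d,
      |H x p - H y p| ≤ (Λ * ‖p‖ ^ m + M r) * ‖x - y‖))

set_option maxHeartbeats 2000000 in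
/-- **Key Hamiltonian estimate** (Lemma `lemma AT`): for `H ∈ ℋ(m,Λ,(a_r),(M_r))` a
pointwise infimum of convex Hamiltonians `H_i ∈ 𝔅(m_i,Λ,(a_r),(M_r))`, given
`η ∈ (0,1/8)`, `R_η > 1` and families `x_ε, y_ε, q_ε` with `|x_ε|,|y_ε| ≤ R_η - 1`,
`|q_ε| ≤ η` and `|x_ε - y_ε| → 0`, there are `ε(η) > 0`, `C > 0` and `C_η > 0` such that,
with `s = 1 - 4η` and `p_ε = (x_ε - y_ε)/ε`, for all `ε < ε(η)`:
`s H(x_ε, (p_ε + q_ε)/s) - H(y_ε, p_ε) ≥ -C(1-s) - C_η|x_ε - y_ε|`. -/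
theorem statement14 (d : ℕ) (hd : 0 < d) (m Λ : ℝ) (hm : 1 < m) (hΛ : 0 < Λ)
    (a M : ℝ → ℝ) (haM : GoodFamilies a M)
    (H : Euc d → Euc d → ℝ) (hH : MemH d m Λ a M H)
    (I : Type) (hI : Nonempty I) (mi : I → ℝ) (hmi : ∀ i, 1 < mi i)
    (Hi : I → Euc d → Euc d → ℝ) (hHi : ∀ i, MemB d (mi i) Λ a M (Hi i))
    (hinf : ∀ x p : Euc d, H x p = ⨅ i, Hi i x p)
    (η : ℝ) (hη : η ∈ Ioo (0 : ℝ) (1 / 8)) (Rη : ℝ) (hRη : 1 < Rη)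
    (xe ye qe : ℝ → Euc d)
    (hxe : ∀ ε ∈ Ioo (0 : ℝ) 1, ‖xe ε‖ ≤ Rη - 1)
    (hye : ∀ ε ∈ Ioo (0 : ℝ) 1, ‖ye ε‖ ≤ Rη - 1)
    (hqe : ∀ ε ∈ Ioo (0 : ℝ) 1, ‖qe ε‖ ≤ η)
    (hconv : Tendsto (fun ε => ‖xe ε - ye ε‖) (nhdsWithin 0 (Ioo (0 : ℝ) 1)) (nhds 0)) :
    ∃ ε₀ : ℝ, 0 < ε₀ ∧ ∃ C : ℝ, 0 < C ∧ ∃ Cη : ℝ, 0 < Cη ∧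
      ∀ ε ∈ Ioo (0 : ℝ) 1, ε < ε₀ →
        -(C * (4 * η)) - Cη * ‖xe ε - ye ε‖ ≤
          (1 - 4 * η) * H (xe ε) ((1 - 4 * η)⁻¹ • (ε⁻¹ • (xe ε - ye ε) + qe ε)) -
            H (ye ε) (ε⁻¹ • (xe ε - ye ε)) := by
  classical
  obtain ⟨hη0, hη8⟩ := hη
  have hR0 : (0:ℝ) < Rη := lt_trans one_pos hRη
  obtain ⟨⟨ha0, ha1⟩, hM1⟩ := haM Rη hR0
  have hMR0 : (0:ℝ) < M Rη := lt_of_lt_of_le one_pos hM1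
  have hm1 : (0:ℝ) < m - 1 := by linarith only [hm]
  have hm0 : (0:ℝ) ≤ m := by linarith only [hm]
  have hs0 : (0:ℝ) < 1 - 4*η := by linarith only [hη8]
  have hη4 : (0:ℝ) < 4*η := by linarith only [hη0]
  -- constants
  obtain ⟨A, hAdef⟩ : ∃ t : ℝ, t = Λ / a Rη + 1 := ⟨_, rfl⟩
  have hA1 : (1:ℝ) ≤ A := by
    have h : 0 ≤ Λ / a Rη := div_nonneg hΛ.le ha0.le
    rw [hAdef]; linarith only [h]
  have hA0 : (0:ℝ) < A := by linarith only [hA1]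
  obtain ⟨E, hEdef⟩ : ∃ t : ℝ, t = 1 + (Λ + M Rη + 1)/(a Rη) := ⟨_, rfl⟩
  have hE1 : (1:ℝ) ≤ E := by
    have h : 0 ≤ (Λ + M Rη + 1)/(a Rη) := div_nonneg (by linarith only [hΛ, hMR0]) ha0.le
    rw [hEdef]; linarith only [h]
  have hE0 : (0:ℝ) < E := by linarith only [hE1]
  have hQ16 : (0:ℝ) < (16:ℝ)^m := Real.rpow_pos_of_pos (by norm_num) m
  have hQ2 : (0:ℝ) < (2:ℝ)^m := Real.rpow_pos_of_pos (by norm_num) m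
  have hQ4 : (0:ℝ) < (4:ℝ)^m := Real.rpow_pos_of_pos (by norm_num) m
  obtain ⟨β, hβdef⟩ : ∃ t : ℝ, t = a Rη / (4*Λ*A*(16:ℝ)^m) := ⟨_, rfl⟩
  have hden : (0:ℝ) < 4*Λ*A*(16:ℝ)^m :=
    mul_pos (mul_pos (mul_pos (by norm_num : (0:ℝ) < 4) hΛ) hA0) hQ16
  have hβ0 : 0 < β := by rw [hβdef]; exact div_pos ha0 hden
  obtain ⟨τ, hτdef⟩ : ∃ t : ℝ, t = min (1/4 : ℝ) ((min 1 β) ^ (1/(m-1))) := ⟨_, rfl⟩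
  have hminβ0 : 0 < min 1 β := lt_min one_pos hβ0
  have hτ0 : 0 < τ := by
    rw [hτdef]; exact lt_min (by norm_num) (Real.rpow_pos_of_pos hminβ0 _)
  have hτ4 : τ ≤ 1/4 := by rw [hτdef]; exact min_le_left _ _
  have hτβ : τ ^ (m-1) ≤ β := by
    have h1 : τ ^ (m-1) ≤ ((min 1 β) ^ (1/(m-1))) ^ (m-1) :=
      Real.rpow_le_rpow hτ0.le (by rw [hτdef]; exact min_le_right _ _) hm1.le
    have h2 : ((min 1 β) ^ (1/(m-1))) ^ (m-1) = min 1 β := by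
      rw [← Real.rpow_mul hminβ0.le, one_div, inv_mul_cancel₀ hm1.ne', Real.rpow_one]
    rw [h2] at h1
    exact h1.trans (min_le_right _ _)
  obtain ⟨g0, hg0def⟩ : ∃ t : ℝ, t = τ * a Rη / ((2:ℝ)^m * 2) := ⟨_, rfl⟩
  have hg00 : 0 < g0 := by
    rw [hg0def]; exact div_pos (mul_pos hτ0 ha0) (mul_pos hQ2 two_pos)
  obtain ⟨K0, hK0def⟩ : ∃ t : ℝ, t = max 2 (1 + 1/(4*τ)) := ⟨_, rfl⟩
  have hK02 : (2:ℝ) ≤ K0 := by rw [hK0def]; exact le_max_left _ _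
  obtain ⟨C2, hC2def⟩ : ∃ t : ℝ, t = M Rη + 2*Λ*(E+1) + 1 := ⟨_, rfl⟩
  have hΛE : (0:ℝ) < Λ*(E+1) := mul_pos hΛ (by linarith only [hE0])
  have hC20 : 0 < C2 := by rw [hC2def]; linarith only [hMR0, hΛE]
  obtain ⟨K, hKdef⟩ : ∃ t : ℝ, t = C2 + M Rη + 2*Λ + 1 := ⟨_, rfl⟩
  have hK0' : 0 < K := by rw [hKdef]; linarith only [hC20, hMR0, hΛ]
  obtain ⟨Cη, hCηdef⟩ : ∃ t : ℝ, t = Λ * K0 ^ m + M Rη := ⟨_, rfl⟩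
  have hCη0 : 0 < Cη := by
    have h : 0 ≤ Λ * K0 ^ m :=
      mul_nonneg hΛ.le (Real.rpow_nonneg (by linarith only [hK02]) m)
    rw [hCηdef]; linarith only [h, hMR0]
  obtain ⟨δ0, hδ0def⟩ : ∃ t : ℝ, t = min 1 (4*η*g0/Λ) := ⟨_, rfl⟩
  have hδ00 : 0 < δ0 := by
    rw [hδ0def]; exact lt_min one_pos (div_pos (mul_pos hη4 hg00) hΛ)
  have hev : ∀ᶠ e in nhdsWithin 0 (Ioo (0:ℝ) 1), ‖xe e - ye e‖ < δ0 :=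
    hconv.eventually_lt_const hδ00
  obtain ⟨ε₀, hε₀0, hsub⟩ := Metric.mem_nhdsWithin_iff.1 hev
  refine ⟨ε₀, hε₀0, K / (4*η), div_pos hK0' hη4, Cη, hCη0, ?_⟩
  rintro ε ⟨hε0, hε1⟩ hεlt
  have hδlt : ‖xe ε - ye ε‖ < δ0 := by
    have hmem : ε ∈ ball (0:ℝ) ε₀ ∩ Ioo 0 1 := by
      constructor
      · rw [mem_ball, Real.dist_eq, sub_zero, abs_of_pos hε0]; exact hεlt
      · exact ⟨hε0, hε1⟩
    exact hsub hmem
  have hq0 : ‖qe ε‖ ≤ η := hqe ε ⟨hε0, hε1⟩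
  have hxball : xe ε ∈ ball (0:Euc d) Rη := by
    rw [mem_ball_zero_iff]
    have h := hxe ε ⟨hε0, hε1⟩
    linarith only [h, hRη]
  have hyball : ye ε ∈ ball (0:Euc d) Rη := by
    rw [mem_ball_zero_iff]
    have h := hye ε ⟨hε0, hε1⟩
    linarith only [h, hRη]
  set x := xe ε with hxdef
  set y := ye ε with hydef
  set q := qe ε with hqdef
  set p := ε⁻¹ • (x - y) with hpdef
  set pt := (1 - 4*η)⁻¹ • (p + q) with hptdef
  set z := (-(4*η)⁻¹) • q with hzdef
  have hδ1 : ‖x - y‖ ≤ 1 := by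
    have h : δ0 ≤ 1 := by rw [hδ0def]; exact min_le_left _ _
    linarith only [hδlt, h]
  have hδnn : (0:ℝ) ≤ ‖x - y‖ := norm_nonneg _
  have hδg : Λ * ‖x - y‖ ≤ 4*η*g0 := by
    have h0 : δ0 ≤ 4*η*g0/Λ := by rw [hδ0def]; exact min_le_right _ _
    have h1 : ‖x - y‖ < 4*η*g0/Λ := lt_of_lt_of_le hδlt h0
    rw [lt_div_iff₀ hΛ] at h1
    linarith only [h1]
  have hznorm : ‖z‖ ≤ 1/4 := by
    rw [hzdef, norm_smul, Real.norm_eq_abs, abs_neg, abs_of_pos (inv_pos.2 hη4)]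
    have h1 : (4*η)⁻¹ * ‖q‖ ≤ (4*η)⁻¹ * η := mul_le_mul_of_nonneg_left hq0 (inv_nonneg.2 hη4.le)
    have h2 : (4*η)⁻¹ * η = 1/4 := by
      rw [mul_inv, mul_assoc, inv_mul_cancel₀ hη0.ne']
      norm_num
    linarith only [h1, h2]
  -- bounds for H
  have hHbd := (hH.2 Rη hR0).1
  have hyx : H y p ≤ H x p + (Λ*‖p‖^m + M Rη)*‖x - y‖ := by
    have h := (hH.2 Rη hR0).2 x hxball y hyball p
    have h2 := abs_le.1 h
    linarith only [h2.1]
  -- infimum structure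
  have hbdd : ∀ v : Euc d, BddBelow (Set.range fun j => Hi j x v) := by
    intro v
    refine ⟨-(M Rη), ?_⟩
    rintro b ⟨j, rfl⟩
    show -(M Rη) ≤ Hi j x v
    have hfl := ((hHi j).2.2.2 Rη hR0 x hxball v).1
    have h1 : 0 ≤ a Rη * ‖v‖ ^ (mi j) :=
      mul_nonneg ha0.le (Real.rpow_nonneg (norm_nonneg v) _)
    linarith only [hfl, h1]
  have hHle : ∀ (v : Euc d) (j : I), H x v ≤ Hi j x v := by
    intro v j
    rw [hinf x v]
    exact ciInf_le (hbdd v) j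
  obtain ⟨i, hi⟩ : ∃ j, Hi j x pt < H x pt + 1 := by
    apply exists_lt_of_ciInf_lt
    rw [← hinf x pt]
    exact lt_add_one _
  have hψconv : ConvexOn ℝ univ (Hi i x) := (hHi i).2.1 x
  have hψbd : ∀ v : Euc d,
      a Rη * ‖v‖ ^ (mi i) - M Rη ≤ Hi i x v ∧ Hi i x v ≤ Λ * (‖v‖ ^ (mi i) + 1) :=
    fun v => (hHi i).2.2.2 Rη hR0 x hxball v
  have hμ0 : (0:ℝ) ≤ mi i := by linarith only [hmi i]
  have hsψ : (1-4*η) * (Hi i x pt) - 1 ≤ (1-4*η) * H x pt := by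
    have h1 : (1-4*η) * (Hi i x pt) ≤ (1-4*η) * (H x pt + 1) :=
      mul_le_mul_of_nonneg_left hi.le hs0.le
    linarith only [h1, hη0]
  have hKK : K / (4*η) * (4*η) = K := div_mul_cancel₀ K hη4.ne'
  rw [hKK]
  have hc1 : ((4*η) : ℝ) * -(4*η)⁻¹ = -1 := by
    rw [mul_neg, mul_inv_cancel₀ hη4.ne']
  have hzq : (4*η) • z = -q := by
    rw [hzdef, smul_smul (4*η) (-(4*η)⁻¹) q, hc1, neg_one_smul]
  have hptq : (1-4*η) • pt = p + q := by
    rw [hptdef]; exact smul_inv_smul₀ hs0.ne' _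
  by_cases hPK : ‖p‖ ≤ K0
  · -- SMALL |p| case
    have hpoint : (1-4*η) • pt + (4*η) • z = p := by
      rw [hptq, hzq]
      abel
    have hconvx : Hi i x p ≤ (1-4*η) * Hi i x pt + (4*η) * Hi i x z := by
      have h := hψconv.2 (mem_univ pt) (mem_univ z) hs0.le hη4.le (by ring)
      rwa [hpoint] at h
    have hψz : Hi i x z ≤ 2*Λ := by
      have h1 := (hψbd z).2
      have h2 : ‖z‖ ^ (mi i) ≤ 1 :=
        Real.rpow_le_one (norm_nonneg z) (by linarith only [hznorm]) hμ0
      have h3 : Λ * ‖z‖ ^ (mi i) ≤ Λ * 1 := mul_le_mul_of_nonneg_left h2 hΛ.le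
      linarith only [h1, h3]
    have hψp : H x p ≤ Hi i x p := hHle p i
    have hpm : ‖p‖ ^ m ≤ K0 ^ m := Real.rpow_le_rpow (norm_nonneg p) hPK hm0
    have h8a : (4*η)*(Hi i x z) ≤ (4*η)*(2*Λ) := mul_le_mul_of_nonneg_left hψz hη4.le
    have h8b : (4*η)*(2*Λ) ≤ Λ := by
      have h := mul_nonneg (show (0:ℝ) ≤ 1-8*η by linarith only [hη8]) hΛ.le
      linarith only [h]
    have hsp : (Λ*‖p‖^m + M Rη)*‖x-y‖ ≤ Cη * ‖x-y‖ := by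
      apply mul_le_mul_of_nonneg_right _ hδnn
      have h := mul_le_mul_of_nonneg_left hpm hΛ.le
      rw [hCηdef]
      linarith only [h]
    linarith only [hsψ, hconvx, hψp, hyx, h8a, h8b, hsp, hΛ.le, hC20, hMR0, hKdef]
  · -- LARGE |p| case
    push_neg at hPK
    have hP2 : (2:ℝ) ≤ ‖p‖ := hK02.trans hPK.le
    have hpq1 : ‖p‖ - 1 ≤ ‖p + q‖ := by
      have h1 : ‖p‖ ≤ ‖p + q‖ + ‖q‖ := by
        calc ‖p‖ = ‖(p + q) - q‖ := by rw [add_sub_cancel_right]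
        _ ≤ ‖p + q‖ + ‖q‖ := norm_sub_le _ _
      linarith only [h1, hq0, hη8]
    have hptnorm : ‖pt‖ = (1-4*η)⁻¹ * ‖p + q‖ := by
      rw [hptdef, norm_smul, Real.norm_eq_abs, abs_of_pos (inv_pos.2 hs0)]
    have hmc : (1-4*η) * (1-4*η)⁻¹ = 1 := mul_inv_cancel₀ hs0.ne'
    have hinvpos : (0:ℝ) < (1-4*η)⁻¹ := inv_pos.2 hs0
    have hinv1 : (1:ℝ) ≤ (1-4*η)⁻¹ := by
      have h2 : 0 ≤ η*(1-4*η)⁻¹ := mul_nonneg hη0.le hinvpos.le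
      linarith only [hmc, h2]
    have hinv2 : (1-4*η)⁻¹ ≤ 2 := by
      have h2 : 0 ≤ (1-4*η)⁻¹ * ((1-4*η) - 1/2) :=
        mul_nonneg hinvpos.le (by linarith only [hη8])
      linarith only [hmc, h2]
    have hpt_lo : ‖p‖ - 1 ≤ ‖pt‖ := by
      rw [hptnorm]
      have hprod : 0 ≤ ((1-4*η)⁻¹ - 1) * ‖p + q‖ :=
        mul_nonneg (by linarith only [hinv1]) (norm_nonneg (p+q))
      linarith only [hpq1, hprod]
    have hpt_hi : ‖pt‖ ≤ 4*‖p‖ := by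
      rw [hptnorm]
      have h1 : ‖p + q‖ ≤ ‖p‖ + ‖q‖ := norm_add_le _ _
      have hprod2 : 0 ≤ (2 - (1-4*η)⁻¹) * ‖p + q‖ :=
        mul_nonneg (by linarith only [hinv2]) (norm_nonneg (p+q))
      linarith only [hprod2, h1, hq0, hη8, hP2]
    have hpt1 : (1:ℝ) ≤ ‖pt‖ := by linarith only [hpt_lo, hP2]
    have hpt_tau : 1/(4*τ) ≤ ‖pt‖ := by
      have h1 : 1 + 1/(4*τ) ≤ K0 := by rw [hK0def]; exact le_max_right _ _
      linarith only [h1, hPK, hpt_lo]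
    set w := (1-τ) • z + τ • pt with hwdef
    have h1τ : (0:ℝ) < 1 - τ := by linarith only [hτ4]
    have hwnorm : ‖w‖ ≤ 2*τ*‖pt‖ := by
      have h1 : ‖w‖ ≤ (1-τ)*‖z‖ + τ*‖pt‖ := by
        calc ‖w‖ ≤ ‖(1-τ) • z‖ + ‖τ • pt‖ := by rw [hwdef]; exact norm_add_le _ _
          _ = (1-τ)*‖z‖ + τ*‖pt‖ := by
              rw [norm_smul (1-τ) z, norm_smul τ pt, Real.norm_eq_abs (1-τ),
                Real.norm_eq_abs τ, abs_of_pos h1τ, abs_of_pos hτ0]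
      have h2 : (1-τ)*‖z‖ ≤ 1/4 := by
        have h2a := mul_le_mul_of_nonneg_left hznorm h1τ.le
        linarith only [h2a, hτ0]
      have h3 : (1/4:ℝ) ≤ τ*‖pt‖ := by
        have h4 : τ*(1/(4*τ)) ≤ τ*‖pt‖ := mul_le_mul_of_nonneg_left hpt_tau hτ0.le
        have h5 : τ*(1/(4*τ)) = 1/4 := by
          field_simp [hτ0.ne']
          try ring
        linarith only [h4, h5]
      linarith only [h1, h2, h3]
    have hψpt_le : Hi i x pt ≤ Λ*(‖pt‖^m + 1) + 1 := by
      have h1 := (hHbd x hxball pt).2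
      linarith only [h1, hi]
    have hstar : ‖pt‖^(mi i) ≤ (Λ*‖pt‖^m + (Λ + M Rη + 1))/(a Rη) := by
      rw [le_div_iff₀ ha0]
      have h1 := (hψbd pt).1
      linarith only [h1, hψpt_le]
    have hQTnn : (0:ℝ) ≤ (2*τ)^m := Real.rpow_nonneg (by linarith only [hτ0]) m
    have hYnn : (0:ℝ) ≤ ‖pt‖^m := Real.rpow_nonneg (norm_nonneg pt) m
    have hXnn : (0:ℝ) ≤ ‖p‖^m := Real.rpow_nonneg (norm_nonneg p) m
    have hYμnn : (0:ℝ) ≤ ‖pt‖^(mi i) := Real.rpow_nonneg (norm_nonneg pt) _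
    have hQYA : (0:ℝ) ≤ (2*τ)^m * ‖pt‖^m * A := mul_nonneg (mul_nonneg hQTnn hYnn) hA0.le
    have hWμ : ‖w‖^(mi i) ≤ (2*τ)^m * ‖pt‖^m * A + E := by
      rcases le_or_gt ‖w‖ 1 with hw1 | hw1
      · have h1 : ‖w‖^(mi i) ≤ 1 := Real.rpow_le_one (norm_nonneg w) hw1 hμ0
        linarith only [h1, hE1, hQYA]
      · have hmulμ : (2*τ*‖pt‖)^(mi i) = (2*τ)^(mi i) * ‖pt‖^(mi i) :=
          Real.mul_rpow (by linarith only [hτ0]) (norm_nonneg pt)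
        rcases le_or_gt (mi i) m with hμm | hμm
        · have h1 : ‖w‖^(mi i) ≤ ‖w‖^m := Real.rpow_le_rpow_of_exponent_le hw1.le hμm
          have h2 : ‖w‖^m ≤ (2*τ*‖pt‖)^m := Real.rpow_le_rpow (norm_nonneg w) hwnorm hm0
          have h3 : (2*τ*‖pt‖)^m = (2*τ)^m * ‖pt‖^m :=
            Real.mul_rpow (by linarith only [hτ0]) (norm_nonneg pt)
          have h4 : (2*τ)^m * ‖pt‖^m * 1 ≤ (2*τ)^m * ‖pt‖^m * A :=
            mul_le_mul_of_nonneg_left hA1 (mul_nonneg hQTnn hYnn)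
          linarith only [h1, h2, h3, h4, hE0]
        · have h1 : ‖w‖^(mi i) ≤ (2*τ*‖pt‖)^(mi i) :=
            Real.rpow_le_rpow (norm_nonneg w) hwnorm hμ0
          have h3 : (2*τ)^(mi i) ≤ (2*τ)^m :=
            Real.rpow_le_rpow_of_exponent_ge (by linarith only [hτ0])
              (by linarith only [hτ4]) hμm.le
          have hQT1 : (2*τ)^m ≤ 1 :=
            Real.rpow_le_one (by linarith only [hτ0]) (by linarith only [hτ4]) hm0
          have c1 : ‖w‖^(mi i) ≤ (2*τ)^m * ‖pt‖^(mi i) := by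
            rw [hmulμ] at h1
            have c1' : (2*τ)^(mi i) * ‖pt‖^(mi i) ≤ (2*τ)^m * ‖pt‖^(mi i) :=
              mul_le_mul_of_nonneg_right h3 hYμnn
            linarith only [h1, c1']
          have c2 : (2*τ)^m * ‖pt‖^(mi i)
              ≤ (2*τ)^m * ((Λ*‖pt‖^m + (Λ + M Rη + 1))/(a Rη)) :=
            mul_le_mul_of_nonneg_left hstar hQTnn
          have c3 : (2*τ)^m * ((Λ*‖pt‖^m + (Λ + M Rη + 1))/(a Rη))
              = (2*τ)^m * ‖pt‖^m * (Λ/(a Rη)) + (2*τ)^m * ((Λ + M Rη + 1)/(a Rη)) := by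
            field_simp
          have c4 : (2*τ)^m * ‖pt‖^m * (Λ/(a Rη)) ≤ (2*τ)^m * ‖pt‖^m * A := by
            apply mul_le_mul_of_nonneg_left _ (mul_nonneg hQTnn hYnn)
            rw [hAdef]
            linarith only [ha0]
          have c5 : (2*τ)^m * ((Λ + M Rη + 1)/(a Rη)) ≤ E := by
            have h4 : 0 ≤ (Λ + M Rη + 1)/(a Rη) :=
              div_nonneg (by linarith only [hΛ, hMR0]) ha0.le
            have h5 : (2*τ)^m * ((Λ + M Rη + 1)/(a Rη)) ≤ 1 * ((Λ + M Rη + 1)/(a Rη)) :=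
              mul_le_mul_of_nonneg_right hQT1 h4
            rw [hEdef]
            linarith only [h5, h4]
          linarith only [c1, c2, c3, c4, c5]
    have hψw : Hi i x w ≤ Λ*((2*τ)^m*‖pt‖^m*A + E + 1) := by
      have h1 := (hψbd w).2
      have h2 := mul_le_mul_of_nonneg_left hWμ hΛ.le
      linarith only [h1, h2]
    -- convex combination with gain
    obtain ⟨αc, hαcdef⟩ : ∃ t : ℝ, t = (4*η)/(1-τ) := ⟨_, rfl⟩
    obtain ⟨βc, hβcdef⟩ : ∃ t : ℝ, t = ((1-4*η)-τ)/(1-τ) := ⟨_, rfl⟩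
    obtain ⟨γc, hγcdef⟩ : ∃ t : ℝ, t = (4*η*τ)/(1-τ) := ⟨_, rfl⟩
    have hτs : τ < 1-4*η := by linarith only [hτ4, hη8]
    have hαc0 : 0 ≤ αc := by rw [hαcdef]; exact div_nonneg hη4.le h1τ.le
    have hβc0 : 0 ≤ βc := by
      rw [hβcdef]; exact div_nonneg (by linarith only [hτs]) h1τ.le
    have hγc0 : 0 ≤ γc := by
      rw [hγcdef]; exact div_nonneg (mul_nonneg hη4.le hτ0.le) h1τ.le
    have hsum : αc + βc = 1 := by
      rw [hαcdef, hβcdef]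
      field_simp [h1τ.ne']
      try ring
    have hγeq : βc + γc = 1-4*η := by
      rw [hβcdef, hγcdef]
      field_simp [h1τ.ne']
      try ring
    have hγlo : 4*η*τ ≤ γc := by
      rw [hγcdef, le_div_iff₀ h1τ]
      have h := mul_nonneg (mul_nonneg hη4.le hτ0.le) hτ0.le
      linarith only [h]
    have hγhi : γc ≤ 4*η := by
      rw [hγcdef, div_le_iff₀ h1τ]
      have h := mul_nonneg hη4.le (show (0:ℝ) ≤ 1 - 2*τ by linarith only [hτ4])
      linarith only [h]
    have hαhi : αc ≤ 6*η := by
      rw [hαcdef, div_le_iff₀ h1τ]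
      have h := mul_nonneg hη0.le (show (0:ℝ) ≤ 1 - 3*τ by linarith only [hτ4])
      linarith only [h]
    have e1 : αc * (1-τ) = 4*η := by
      rw [hαcdef]
      field_simp [h1τ.ne']
      try ring
    have e2 : αc * τ + βc = 1-4*η := by
      rw [hαcdef, hβcdef]
      field_simp [h1τ.ne']
      try ring
    have hwsplit : αc • w = (4*η) • z + (αc*τ) • pt := by
      rw [hwdef, smul_add, smul_smul αc (1-τ) z, smul_smul αc τ pt, e1]
    have hpoint : αc • w + βc • pt = p := by
      rw [hwsplit, hzq, add_assoc, ← add_smul, e2, hptq]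
      abel
    have hconvx : Hi i x p ≤ αc * Hi i x w + βc * Hi i x pt := by
      have h := hψconv.2 (mem_univ w) (mem_univ pt) hαc0 hβc0 hsum
      rwa [hpoint] at h
    have hγψ : 4*η*τ*(a Rη*‖pt‖^m) - 4*η*(M Rη) ≤ γc * Hi i x pt := by
      have l1 : a Rη*‖pt‖^m - M Rη ≤ Hi i x pt :=
        le_trans ((hHbd x hxball pt).1) (hHle pt i)
      have l2 : γc * (a Rη*‖pt‖^m - M Rη) ≤ γc * Hi i x pt :=
        mul_le_mul_of_nonneg_left l1 hγc0
      have l3 : 0 ≤ a Rη*‖pt‖^m := mul_nonneg ha0.le hYnn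
      have q1 := mul_nonneg (sub_nonneg.2 hγlo) l3
      have q2 := mul_nonneg (sub_nonneg.2 hγhi) hMR0.le
      linarith only [l2, q1, q2]
    have hBw0 : 0 ≤ Λ*((2*τ)^m*‖pt‖^m*A + E + 1) :=
      mul_nonneg hΛ.le (by linarith only [hQYA, hE0])
    have hαψw : αc * Hi i x w ≤ 6*η*(Λ*((2*τ)^m*‖pt‖^m*A + E + 1)) := by
      have l1 : αc * Hi i x w ≤ αc * (Λ*((2*τ)^m*‖pt‖^m*A + E + 1)) :=
        mul_le_mul_of_nonneg_left hψw hαc0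
      have q := mul_nonneg (sub_nonneg.2 hαhi) hBw0
      linarith only [l1, q]
    have hsplit : (1-4*η) * Hi i x pt = βc * Hi i x pt + γc * Hi i x pt := by
      rw [← add_mul, hγeq]
    have key1 : Hi i x p + γc * Hi i x pt - αc * Hi i x w ≤ (1-4*η) * Hi i x pt := by
      linarith only [hconvx, hsplit]
    have hptm_lo : ‖p‖^m / (2:ℝ)^m ≤ ‖pt‖^m := by
      have h1 : ‖p‖/2 ≤ ‖pt‖ := by linarith only [hpt_lo, hP2]
      have h2 : (‖p‖/2)^m ≤ ‖pt‖^m :=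
        Real.rpow_le_rpow (by positivity) h1 hm0
      rwa [Real.div_rpow (norm_nonneg p) (by norm_num : (0:ℝ) ≤ 2)] at h2
    have hptm_hi : ‖pt‖^m ≤ (4:ℝ)^m * ‖p‖^m := by
      have h2 : ‖pt‖^m ≤ (4*‖p‖)^m :=
        Real.rpow_le_rpow (norm_nonneg pt) hpt_hi hm0
      rwa [Real.mul_rpow (by norm_num : (0:ℝ) ≤ 4) (norm_nonneg p)] at h2
    have ht1 : τ ^ m = τ^(m-1) * τ := by
      have e : m - 1 + 1 = m := by ring
      have e2 : τ ^ m = τ ^ (m-1+1) := by rw [e]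
      rw [e2, Real.rpow_add hτ0, Real.rpow_one]
    have h16 : (16:ℝ)^m = (2:ℝ)^m * (4:ℝ)^m * (2:ℝ)^m := by
      have h := Real.mul_rpow (show (0:ℝ) ≤ 2*4 by norm_num) (show (0:ℝ) ≤ 2 by norm_num)
        (z := m)
      rw [Real.mul_rpow (show (0:ℝ) ≤ 2 by norm_num) (show (0:ℝ) ≤ 4 by norm_num)] at h
      norm_num at h
      exact h
    have hβ4 : Λ*A*(16:ℝ)^m*β = a Rη/4 := by
      rw [hβdef]
      field_simp [hΛ.ne', hA0.ne', hQ16.ne']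
      try ring
    have hcoef : 6*Λ*A*((2*τ)^m*(4:ℝ)^m)*(2:ℝ)^m ≤ 2*τ*(a Rη) := by
      have hQT : (2*τ)^m = (2:ℝ)^m * (τ^(m-1)*τ) := by
        rw [Real.mul_rpow (show (0:ℝ) ≤ 2 by norm_num) hτ0.le, ht1]
      rw [hQT]
      have hmono : 6*(Λ*A*(16:ℝ)^m)*(τ^(m-1)*τ) ≤ 6*(Λ*A*(16:ℝ)^m)*(β*τ) := by
        apply mul_le_mul_of_nonneg_left (mul_le_mul_of_nonneg_right hτβ hτ0.le)
        have h := mul_nonneg (mul_nonneg hΛ.le hA0.le) hQ16.le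
        linarith only [h]
      calc 6*Λ*A*((2:ℝ)^m * (τ^(m-1)*τ)*(4:ℝ)^m)*(2:ℝ)^m
          = 6*(Λ*A*(16:ℝ)^m)*(τ^(m-1)*τ) := by rw [h16]; ring
        _ ≤ 6*(Λ*A*(16:ℝ)^m)*(β*τ) := hmono
        _ = 6*(a Rη/4)*τ := by
            rw [show 6*(Λ*A*(16:ℝ)^m)*(β*τ) = 6*(Λ*A*(16:ℝ)^m*β)*τ by ring, hβ4]
        _ ≤ 2*τ*(a Rη) := by
            have h := mul_nonneg hτ0.le ha0.le
            linarith only [h]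
    have hXQ : 0 ≤ η * (‖p‖^m/(2:ℝ)^m) := mul_nonneg hη0.le (div_nonneg hXnn hQ2.le)
    have u2 : Λ*((2*τ)^m*‖pt‖^m*A) ≤ Λ*((2*τ)^m*((4:ℝ)^m*‖p‖^m)*A) := by
      apply mul_le_mul_of_nonneg_left _ hΛ.le
      apply mul_le_mul_of_nonneg_right _ hA0.le
      exact mul_le_mul_of_nonneg_left hptm_hi hQTnn
    have u3 : 6*η*(Λ*((2*τ)^m*((4:ℝ)^m*‖p‖^m)*A)) ≤ 2*η*(τ*(a Rη)*(‖p‖^m/(2:ℝ)^m)) := by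
      have h := mul_le_mul_of_nonneg_right hcoef hXQ
      have eL : 6*Λ*A*((2*τ)^m*(4:ℝ)^m)*(2:ℝ)^m * (η*(‖p‖^m/(2:ℝ)^m))
          = 6*η*(Λ*((2*τ)^m*((4:ℝ)^m*‖p‖^m)*A)) := by
        field_simp [hQ2.ne']
        try ring
      have eR : 2*τ*(a Rη) * (η*(‖p‖^m/(2:ℝ)^m)) = 2*η*(τ*(a Rη)*(‖p‖^m/(2:ℝ)^m)) := by
        ring
      rw [eL, eR] at h
      exact h
    have u1 : 4*η*τ*(a Rη*(‖p‖^m/(2:ℝ)^m)) ≤ 4*η*τ*(a Rη*‖pt‖^m) := by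
      apply mul_le_mul_of_nonneg_left _ (mul_nonneg hη4.le hτ0.le)
      exact mul_le_mul_of_nonneg_left hptm_lo ha0.le
    have hg0X : 4*η*g0*‖p‖^m = 2*η*(τ*(a Rη)*(‖p‖^m/(2:ℝ)^m)) := by
      rw [hg0def]
      field_simp [hQ2.ne']
      try ring
    have key2 : 4*η*g0*‖p‖^m ≤ 4*η*τ*(a Rη*‖pt‖^m) - 6*η*(Λ*((2*τ)^m*‖pt‖^m*A)) := by
      have t1 : 6*η*(Λ*((2*τ)^m*‖pt‖^m*A)) ≤ 6*η*(Λ*((2*τ)^m*((4:ℝ)^m*‖p‖^m)*A)) :=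
        mul_le_mul_of_nonneg_left u2 (by linarith only [hη0] : (0:ℝ) ≤ 6*η)
      linarith only [u1, u3, t1, hg0X]
    have hψpH : H x p ≤ Hi i x p := hHle p i
    have key3 : H x p + 4*η*g0*‖p‖^m - (4*η*(M Rη) + 6*η*(Λ*(E+1)) + 1)
        ≤ (1-4*η) * H x pt := by
      linarith only [hsψ, key1, hγψ, hαψw, key2, hψpH]
    have hMδ : M Rη*‖x-y‖ ≤ M Rη := by
      have h := mul_le_mul_of_nonneg_left hδ1 hMR0.le
      linarith only [h]
    have habs : 0 ≤ (4*η*g0 - Λ*‖x-y‖) * ‖p‖^m :=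
      mul_nonneg (by linarith only [hδg]) hXnn
    have hconsts : 4*η*(M Rη) + 6*η*(Λ*(E+1)) + 1 ≤ C2 := by
      have c1 := mul_nonneg (show (0:ℝ) ≤ 1-4*η by linarith only [hη8]) hMR0.le
      have c2 := mul_nonneg (show (0:ℝ) ≤ 2-6*η by linarith only [hη8])
        (mul_nonneg hΛ.le (show (0:ℝ) ≤ E+1 by linarith only [hE0]))
      rw [hC2def]
      linarith only [c1, c2]
    have hCδ : 0 ≤ Cη * ‖x-y‖ := mul_nonneg hCη0.le hδnn
    linarith only [key3, hyx, habs, hMδ, hconsts, hCδ, hΛ.le, hKdef]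
end
end

section
/- Infimum representation for convex-plus-affine-infimum Hamiltonians: let K ∈ ℋ(m, Λ, (a_r), (M_r)) be convex in p, let I be an index set, and let g_i : ℝ^d → ℝ^d and f_i : ℝ^d → ℝ (i ∈ I) be Borel measurable and equibounded, i.e. sup_{i∈I}(sup_x |g_i(x)| + sup_x |f_i(x)|) < +∞. Define G(x,p) := inf_{i∈I} {⟨g_i(x), p⟩ + f_i(x)} and H := K + G, and assume H ∈ ℋ(m, Λ, (a_r), (M_r)). Then H(x,p) = inf_{i∈I} H_i(x,p) for all (x,p), where H_i(x,p) := K(x,p) + ⟨g_i(x), p⟩ + f_i(x), and there exist constants Λ̃ > 0, (ã_r)_{r>0} in (0,1] and (M̃_r)_{r>0} in [1,+∞) such that every H_i belongs to 𝔅(m, Λ̃, (ã_r), (M̃_r)). -/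
open Set Metric Filter
open scoped ENNReal NNReal RealInnerProductSpace

noncomputable section

lemma aux_cont {d : ℕ} {m Λ : ℝ} (hm : 1 < m) (hΛ : 0 < Λ) {a M : ℝ → ℝ}
    (haM : GoodFamilies a M) {K : Euc d → Euc d → ℝ} (hK : MemH d m Λ a M K) :
    Continuous fun q : Euc d × Euc d => K q.1 q.2 := by
  rw [continuous_iff_continuousAt]
  rintro ⟨x₀, p₀⟩
  rw [Metric.continuousAt_iff]
  intro ε hε
  set r : ℝ := ‖x₀‖ + 2 with hr
  have hr0 : 0 < r := by positivity
  set C1 : ℝ := Λ * (2 * ‖p₀‖ + 3) ^ (m - 1) with hC1def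
  set C2 : ℝ := Λ * ‖p₀‖ ^ m + M r with hC2def
  have hC1 : 0 ≤ C1 := by positivity
  have hC2 : 0 ≤ C2 :=
    add_nonneg (mul_nonneg hΛ.le (Real.rpow_nonneg (norm_nonneg _) _))
      (le_trans zero_le_one (haM r hr0).2)
  refine ⟨min 1 (ε / (C1 + C2 + 1)), lt_min one_pos (by positivity), ?_⟩
  rintro ⟨x, p⟩ hdist
  have hdx : dist x x₀ < min 1 (ε / (C1 + C2 + 1)) :=
    lt_of_le_of_lt (by rw [Prod.dist_eq]; exact le_max_left _ _) hdist
  have hdp : dist p p₀ < min 1 (ε / (C1 + C2 + 1)) :=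
    lt_of_le_of_lt (by rw [Prod.dist_eq]; exact le_max_right _ _) hdist
  have hdx1 : dist x x₀ < 1 := lt_of_lt_of_le hdx (min_le_left _ _)
  have hdp1 : dist p p₀ < 1 := lt_of_lt_of_le hdp (min_le_left _ _)
  have hx : x ∈ ball (0 : Euc d) r := by
    rw [mem_ball, dist_zero_right]
    calc ‖x‖ ≤ ‖x₀‖ + dist x x₀ := by
          rw [dist_eq_norm]
          have := norm_sub_norm_le x x₀
          linarith [abs_le.mp (abs_norm_sub_norm_le x x₀)]
      _ < r := by simp only [hr]; linarith
  have hx₀ : x₀ ∈ ball (0 : Euc d) r := by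
    rw [mem_ball, dist_zero_right]; simp only [hr]; linarith
  obtain ⟨hbound, hlip⟩ := hK.2 r hr0
  have hpnorm : ‖p‖ ≤ ‖p₀‖ + 1 := by
    have := abs_le.mp (abs_norm_sub_norm_le p p₀)
    rw [← dist_eq_norm] at this
    linarith [this.1]
  have e1 : |K x p - K x p₀| ≤ C1 * dist p p₀ := by
    refine (hK.1 x p p₀).trans ?_
    rw [← dist_eq_norm, hC1def]
    have hbase : ‖p‖ + ‖p₀‖ + 1 ≤ 2 * ‖p₀‖ + 3 := by linarith
    have hrp : (‖p‖ + ‖p₀‖ + 1) ^ (m - 1) ≤ (2 * ‖p₀‖ + 3) ^ (m - 1) :=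
      Real.rpow_le_rpow (by positivity) hbase (by linarith)
    have hdn := dist_nonneg (x := p) (y := p₀)
    have := mul_le_mul_of_nonneg_right (mul_le_mul_of_nonneg_left hrp hΛ.le) hdn
    linarith
  have e2 : |K x p₀ - K x₀ p₀| ≤ C2 * dist x x₀ := by
    rw [dist_eq_norm]
    exact hlip x hx x₀ hx₀ p₀
  have key : dist (K x p) (K x₀ p₀) ≤ C1 * dist p p₀ + C2 * dist x x₀ := by
    rw [Real.dist_eq]
    calc |K x p - K x₀ p₀| ≤ |K x p - K x p₀| + |K x p₀ - K x₀ p₀| := abs_sub_le _ _ _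
      _ ≤ C1 * dist p p₀ + C2 * dist x x₀ := add_le_add e1 e2
  have hδ : (C1 + C2 + 1) * (ε / (C1 + C2 + 1)) = ε := by
    field_simp
  have hdp' : dist p p₀ < ε / (C1 + C2 + 1) := lt_of_lt_of_le hdp (min_le_right _ _)
  have hdx' : dist x x₀ < ε / (C1 + C2 + 1) := lt_of_lt_of_le hdx (min_le_right _ _)
  have hd0 : (0:ℝ) < ε / (C1 + C2 + 1) := by positivity
  calc dist (K x p) (K x₀ p₀) ≤ C1 * dist p p₀ + C2 * dist x x₀ := key
    _ ≤ C1 * (ε / (C1 + C2 + 1)) + C2 * (ε / (C1 + C2 + 1)) := by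
        have h1 := mul_le_mul_of_nonneg_left hdp'.le hC1
        have h2 := mul_le_mul_of_nonneg_left hdx'.le hC2
        linarith
    _ < (C1 + C2 + 1) * (ε / (C1 + C2 + 1)) := by nlinarith
    _ = ε := hδ

lemma aux_norm_le {d : ℕ} {m : ℝ} (hm : 1 < m) (p : Euc d) : ‖p‖ ≤ ‖p‖ ^ m + 1 := by
  rcases le_or_gt ‖p‖ 1 with h | h
  · have : (0:ℝ) ≤ ‖p‖ ^ m := Real.rpow_nonneg (norm_nonneg _) _
    linarith
  · have h1 : ‖p‖ = ‖p‖ ^ (1 : ℝ) := (Real.rpow_one _).symm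
    have h2 : ‖p‖ ^ (1:ℝ) ≤ ‖p‖ ^ m := Real.rpow_le_rpow_of_exponent_le h.le hm.le
    have : (0:ℝ) ≤ ‖p‖ ^ m := Real.rpow_nonneg (norm_nonneg _) _
    rw [Real.rpow_one] at h2
    linarith

/-- **Infimum representation for convex-plus-affine-infimum Hamiltonians** (Example
`ex 1`): if `H = K + G` with `K ∈ ℋ(m,Λ,(a_r),(M_r))` convex in `p` and
`G(x,p) = inf_i {⟨g_i(x),p⟩ + f_i(x)}` with `g_i, f_i` Borel and equibounded, and
`H ∈ ℋ(m,Λ,(a_r),(M_r))`, then `H = inf_i H_i` with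
`H_i(x,p) = K(x,p) + ⟨g_i(x),p⟩ + f_i(x)`, and the `H_i` belong to a common class
`𝔅(m,Λ̃,(ã_r),(M̃_r))`. -/
theorem statement16 (d : ℕ) (hd : 0 < d) (m Λ : ℝ) (hm : 1 < m) (hΛ : 0 < Λ)
    (a M : ℝ → ℝ) (haM : GoodFamilies a M)
    (K : Euc d → Euc d → ℝ) (hK : MemH d m Λ a M K)
    (hKconv : ∀ x : Euc d, ConvexOn ℝ univ (K x))
    (I : Type) (hI : Nonempty I)
    (g : I → Euc d → Euc d) (f : I → Euc d → ℝ)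
    (hgm : ∀ i, Measurable (g i)) (hfm : ∀ i, Measurable (f i))
    (B : ℝ) (hB : ∀ i x, ‖g i x‖ + |f i x| ≤ B)
    (G : Euc d → Euc d → ℝ) (hG : ∀ x p : Euc d, G x p = ⨅ i, (⟪g i x, p⟫ + f i x))
    (H : Euc d → Euc d → ℝ) (hH : ∀ x p : Euc d, H x p = K x p + G x p)
    (hHmem : MemH d m Λ a M H) :
    (∀ x p : Euc d, H x p = ⨅ i, (K x p + ⟪g i x, p⟫ + f i x)) ∧
    ∃ Λ' : ℝ, 0 < Λ' ∧ ∃ a' M' : ℝ → ℝ, GoodFamilies a' M' ∧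
      ∀ i, MemB d m Λ' a' M' (fun x p => K x p + ⟪g i x, p⟫ + f i x) := by
  haveI := hI
  obtain ⟨i₀⟩ := hI
  have hB0 : 0 ≤ B := le_trans (by positivity) (hB i₀ 0)
  have hgB : ∀ i x, ‖g i x‖ ≤ B := fun i x =>
    le_trans (le_add_of_nonneg_right (abs_nonneg _)) (hB i x)
  have hfB : ∀ i x, |f i x| ≤ B := fun i x =>
    le_trans (le_add_of_nonneg_left (norm_nonneg _)) (hB i x)
  have hinn : ∀ (i : I) (x p : Euc d), |⟪g i x, p⟫| ≤ B * ‖p‖ := fun i x p =>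
    (abs_real_inner_le_norm _ _).trans (mul_le_mul_of_nonneg_right (hgB i x) (norm_nonneg _))
  have hbdd : ∀ x p : Euc d, BddBelow (Set.range fun i => ⟪g i x, p⟫ + f i x) := by
    intro x p
    refine ⟨-(B * ‖p‖ + B), ?_⟩
    rintro _ ⟨i, rfl⟩
    have h1 := (abs_le.mp (hinn i x p)).1
    have h2 := (abs_le.mp (hfB i x)).1
    simp only [neg_add] at *
    linarith
  have hGle : ∀ (x p : Euc d) (i : I), G x p ≤ ⟪g i x, p⟫ + f i x := fun x p i =>
    (hG x p) ▸ ciInf_le (hbdd x p) i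
  constructor
  · intro x p
    rw [hH, hG, add_ciInf (hbdd x p)]
    exact congrArg _ (funext fun i => (add_assoc _ _ _).symm)
  · refine ⟨Λ + 2 * B, by linarith, a, M, haM, fun i => ?_⟩
    have hKcont := aux_cont hm hΛ haM hK
    refine ⟨?_, ?_, ?_, ?_⟩
    · exact (hKcont.measurable.add
        (((hgm i).comp measurable_fst).inner measurable_snd)).add
        ((hfm i).comp measurable_fst)
    · intro x
      have haff : ConvexOn ℝ univ (fun p : Euc d => ⟪g i x, p⟫ + f i x) := by
        refine ⟨convex_univ, fun p _ q _ s t hs ht hst => le_of_eq ?_⟩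
        simp only [smul_eq_mul, inner_add_right, real_inner_smul_right]
        linear_combination (-(f i x)) * hst
      have h := (hKconv x).add haff
      show ConvexOn ℝ univ (fun p : Euc d => K x p + ⟪g i x, p⟫ + f i x)
      have heq : (fun p : Euc d => K x p + ⟪g i x, p⟫ + f i x)
          = K x + fun p : Euc d => ⟪g i x, p⟫ + f i x := by
        funext p; simp [add_assoc]
      rw [heq]; exact h
    · intro x p q
      have h1 := hK.1 x p q
      have hbase : (1:ℝ) ≤ (‖p‖ + ‖q‖ + 1) ^ (m - 1) :=
        Real.one_le_rpow (by linarith [norm_nonneg p, norm_nonneg q]) (by linarith)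
      have h2 : |⟪g i x, p - q⟫| ≤ B * ‖p - q‖ := hinn i x (p - q)
      have heq : K x p + ⟪g i x, p⟫ + f i x - (K x q + ⟪g i x, q⟫ + f i x)
          = (K x p - K x q) + ⟪g i x, p - q⟫ := by
        rw [inner_sub_right]; ring
      rw [heq]
      calc |(K x p - K x q) + ⟪g i x, p - q⟫|
          ≤ |K x p - K x q| + |⟪g i x, p - q⟫| := abs_add_le _ _
        _ ≤ Λ * (‖p‖ + ‖q‖ + 1) ^ (m - 1) * ‖p - q‖ + B * ‖p - q‖ := add_le_add h1 h2
        _ ≤ (Λ + 2 * B) * (‖p‖ + ‖q‖ + 1) ^ (m - 1) * ‖p - q‖ := by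
            have hn := norm_nonneg (p - q)
            have hbn : 0 ≤ B * ‖p - q‖ := mul_nonneg hB0 hn
            nlinarith [mul_le_mul_of_nonneg_left hbase hbn]
    · intro r hr x hx p
      constructor
      · show a r * ‖p‖ ^ m - M r ≤ K x p + ⟪g i x, p⟫ + f i x
        have hlow := ((hHmem.2 r hr).1 x hx p).1
        have hHle : H x p ≤ K x p + ⟪g i x, p⟫ + f i x := by
          rw [hH]
          have := hGle x p i
          linarith
        linarith
      · show K x p + ⟪g i x, p⟫ + f i x ≤ (Λ + 2 * B) * (‖p‖ ^ m + 1)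
        have hup := ((hK.2 r hr).1 x hx p).2
        have h2 := (abs_le.mp (hinn i x p)).2
        have h3 := (abs_le.mp (hfB i x)).2
        have h4 := aux_norm_le hm p
        have h5 : (0:ℝ) ≤ ‖p‖ ^ m := Real.rpow_nonneg (norm_nonneg _) _
        nlinarith [mul_le_mul_of_nonneg_left h4 hB0, mul_nonneg hB0 h5]
end
end

section
/- Infimum representation for semiconcave-type Hamiltonians: let H ∈ ℋ(m, Λ, (a_r), (M_r)) and assume there exist ρ > 0, ℓ ≥ m, and K ∈ 𝔅(ℓ, Λ, (a_r), (M_r)) such that (a) for every x ∈ ℝ^d the function p ↦ H(x,p) − K(x,p) is concave on the ball B_ρ, and (b) for every x ∈ ℝ^d the function p ↦ max{H(x,p), μ(x)} is convex on ℝ^d, where μ(x) := inf_{|p|≥ρ} H(x,p). Then there exist constants Λ̃ > 0, (ã_r)_{r>0} in (0,1], (M̃_r)_{r>0} in [1,+∞), an index set I, exponents m_i > 1 (i ∈ I), and functions H_i ∈ 𝔅(m_i, Λ̃, (ã_r), (M̃_r)) such that H(x,p) = inf_{i∈I} H_i(x,p) for all (x,p) ∈ ℝ^d × ℝ^d. 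-/
open Set Metric Filter
open scoped ENNReal NNReal RealInnerProductSpace

noncomputable section

section helpers

lemma aux_rpow_sub_rpow_le {A B z : ℝ} (hB : 0 < B) (hBA : B ≤ A) (hz : 1 ≤ z) :
    A ^ z - B ^ z ≤ z * A ^ (z - 1) * (A - B) := by
  have hA : 0 < A := lt_of_lt_of_le hB hBA
  have hs : -1 ≤ B / A - 1 := by
    have : 0 ≤ B / A := by positivity
    linarith
  have h := one_add_mul_self_le_rpow_one_add hs hz
  have hBA' : (1 : ℝ) + (B / A - 1) = B / A := by ring
  rw [hBA'] at h
  have hAz : (0:ℝ) < A ^ z := Real.rpow_pos_of_pos hA z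
  have key : A ^ z * (B / A) ^ z = B ^ z := by
    rw [← Real.mul_rpow hA.le (by positivity), mul_div_cancel₀ _ hA.ne']
  have h2 : A ^ z * (1 + z * (B / A - 1)) ≤ B ^ z := by
    calc A ^ z * (1 + z * (B / A - 1)) ≤ A ^ z * (B / A) ^ z :=
          mul_le_mul_of_nonneg_left h hAz.le
      _ = B ^ z := key
  have hA1 : A ^ (z-1) = A ^ z / A := Real.rpow_sub_one hA.ne' z
  rw [hA1]
  have hexp : A ^ z * (1 + z * (B / A - 1)) = A ^ z - z * (A ^ z / A) * (A - B) := by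
    field_simp
    ring
  rw [hexp] at h2
  linarith

lemma aux_add_one_rpow {t z : ℝ} (ht : 0 ≤ t) (hz : 0 ≤ z) :
    (t + 1) ^ z ≤ 2 ^ z * (t ^ z + 1) := by
  have h2 : (0:ℝ) ≤ 2 := by norm_num
  by_cases h : t ≤ 1
  · calc (t + 1) ^ z ≤ 2 ^ z := Real.rpow_le_rpow (by linarith) (by linarith) hz
      _ ≤ 2 ^ z * (t ^ z + 1) := by
        nlinarith [Real.rpow_nonneg ht z, Real.rpow_nonneg h2 z,
          Real.rpow_pos_of_pos (show (0:ℝ) < 2 by norm_num) z]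
  · push_neg at h
    calc (t + 1) ^ z ≤ (2 * t) ^ z := Real.rpow_le_rpow (by linarith) (by linarith) hz
      _ = 2 ^ z * t ^ z := Real.mul_rpow h2 ht
      _ ≤ 2 ^ z * (t ^ z + 1) := by
        nlinarith [Real.rpow_nonneg h2 z]

lemma aux_convexOn_norm_rpow {d : ℕ} (p₀ : EuclideanSpace ℝ (Fin d)) (b z : ℝ) (hb : 0 ≤ b)
    (hz : 1 ≤ z) :
    ConvexOn ℝ univ fun p : EuclideanSpace ℝ (Fin d) => (‖p - p₀‖ + b) ^ z := by
  refine ⟨convex_univ, fun x _ y _ α β hα hβ hαβ => ?_⟩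
  have hA : (0:ℝ) ≤ ‖x - p₀‖ + b := by positivity
  have hB : (0:ℝ) ≤ ‖y - p₀‖ + b := by positivity
  have step1 : ‖(α • x + β • y) - p₀‖ + b ≤ α * (‖x - p₀‖ + b) + β * (‖y - p₀‖ + b) := by
    have hco : (α • x + β • y) - p₀ = α • (x - p₀) + β • (y - p₀) := by
      have hp : α • (x - p₀) + β • (y - p₀) = α • x + β • y - (α + β) • p₀ := by
        rw [add_smul, smul_sub, smul_sub]
        abel
      rw [hp, hαβ, one_smul]
    rw [hco]
    calc ‖α • (x - p₀) + β • (y - p₀)‖ + b ≤ ‖α • (x - p₀)‖ + ‖β • (y - p₀)‖ + b :=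
          by linarith [norm_add_le (α • (x - p₀)) (β • (y - p₀))]
      _ = α * ‖x - p₀‖ + β * ‖y - p₀‖ + b := by
          rw [norm_smul, norm_smul, Real.norm_eq_abs, Real.norm_eq_abs,
            abs_of_nonneg hα, abs_of_nonneg hβ]
      _ = α * (‖x - p₀‖ + b) + β * (‖y - p₀‖ + b) := by nlinarith [hαβ]
  calc (‖(α • x + β • y) - p₀‖ + b) ^ z ≤ (α * (‖x - p₀‖ + b) + β * (‖y - p₀‖ + b)) ^ z :=
        Real.rpow_le_rpow (by positivity) step1 (by linarith)
    _ ≤ α * (‖x - p₀‖ + b) ^ z + β * (‖y - p₀‖ + b) ^ z := by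
        have := (convexOn_rpow hz).2 (mem_Ici.mpr hA) (mem_Ici.mpr hB) hα hβ hαβ
        simpa using this
lemma aux_H_cont {d : ℕ} {m Λ : ℝ} {M : ℝ → ℝ} {H : Euc d → Euc d → ℝ}
    (hm : 1 < m) (hΛ : 0 < Λ)
    (h3 : ∀ x p q : Euc d, |H x p - H x q| ≤ Λ * (‖p‖ + ‖q‖ + 1) ^ (m - 1) * ‖p - q‖)
    (hlip : ∀ r : ℝ, 0 < r → ∀ x ∈ ball (0 : Euc d) r, ∀ y ∈ ball (0 : Euc d) r,
      ∀ p : Euc d, |H x p - H y p| ≤ (Λ * ‖p‖ ^ m + M r) * ‖x - y‖)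
    (hM : ∀ r : ℝ, 0 < r → 1 ≤ M r) :
    Continuous (fun q : Euc d × Euc d => H q.1 q.2) := by
  rw [continuous_iff_continuousAt]
  rintro ⟨x₀, p₀⟩
  rw [Metric.continuousAt_iff]
  intro ε hε
  set r : ℝ := ‖x₀‖ + 2 with hr_def
  have hr : 0 < r := by positivity
  set C₁ : ℝ := Λ * (2 * ‖p₀‖ + 3) ^ (m - 1) with hC₁
  set C₂ : ℝ := Λ * ‖p₀‖ ^ m + M r with hC₂
  have hC₁0 : 0 ≤ C₁ := by positivity
  have hC₂0 : 0 ≤ C₂ := by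
    have h1 := hM r hr
    have h2 : 0 ≤ Λ * ‖p₀‖ ^ m := by positivity
    simp only [hC₂]; linarith
  have hden : 0 < C₁ + C₂ + 1 := by linarith
  refine ⟨min 1 (ε / (C₁ + C₂ + 1)), lt_min one_pos (by positivity), ?_⟩
  rintro ⟨x, p⟩ hxp
  have hd1 : dist x x₀ < min 1 (ε / (C₁ + C₂ + 1)) :=
    lt_of_le_of_lt (by rw [Prod.dist_eq]; exact le_max_left _ _) hxp
  have hd2 : dist p p₀ < min 1 (ε / (C₁ + C₂ + 1)) :=
    lt_of_le_of_lt (by rw [Prod.dist_eq]; exact le_max_right _ _) hxp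
  have hdx1 : dist x x₀ < 1 := lt_of_lt_of_le hd1 (min_le_left _ _)
  have hdp1 : dist p p₀ < 1 := lt_of_lt_of_le hd2 (min_le_left _ _)
  have hdxe : dist x x₀ ≤ ε / (C₁ + C₂ + 1) := le_of_lt (lt_of_lt_of_le hd1 (min_le_right _ _))
  have hdpe : dist p p₀ ≤ ε / (C₁ + C₂ + 1) := le_of_lt (lt_of_lt_of_le hd2 (min_le_right _ _))
  have hxball : x ∈ ball (0 : Euc d) r := by
    rw [mem_ball_zero_iff]
    have h1 : ‖x‖ - ‖x₀‖ ≤ ‖x - x₀‖ := norm_sub_norm_le x x₀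
    rw [dist_eq_norm] at hdx1
    simp only [hr_def]; linarith
  have hx₀ball : x₀ ∈ ball (0 : Euc d) r := by
    rw [mem_ball_zero_iff]; simp only [hr_def]; linarith
  have hpnorm : ‖p‖ ≤ ‖p₀‖ + 1 := by
    have h1 : ‖p‖ - ‖p₀‖ ≤ ‖p - p₀‖ := norm_sub_norm_le p p₀
    rw [dist_eq_norm] at hdp1
    linarith
  rw [Real.dist_eq]
  have main : |H x p - H x₀ p₀| ≤ C₁ * dist p p₀ + C₂ * dist x x₀ := by
    have e1 := h3 x p p₀
    have base : (‖p‖ + ‖p₀‖ + 1) ^ (m - 1) ≤ (2 * ‖p₀‖ + 3) ^ (m - 1) :=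
      Real.rpow_le_rpow (by positivity) (by linarith) (by linarith)
    have e1' : |H x p - H x p₀| ≤ C₁ * ‖p - p₀‖ := by
      refine le_trans e1 ?_
      have hn : (0:ℝ) ≤ ‖p - p₀‖ := norm_nonneg _
      simp only [hC₁]
      exact mul_le_mul_of_nonneg_right (mul_le_mul_of_nonneg_left base hΛ.le) hn
    have e2 := hlip r hr x hxball x₀ hx₀ball p₀
    rw [dist_eq_norm, dist_eq_norm]
    calc |H x p - H x₀ p₀| ≤ |H x p - H x p₀| + |H x p₀ - H x₀ p₀| := abs_sub_le _ _ _
      _ ≤ C₁ * ‖p - p₀‖ + C₂ * ‖x - x₀‖ := by simp only [hC₂]; linarith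
  refine lt_of_le_of_lt main ?_
  have h1 : C₁ * dist p p₀ ≤ C₁ * (ε / (C₁ + C₂ + 1)) := mul_le_mul_of_nonneg_left hdpe hC₁0
  have h2 : C₂ * dist x x₀ ≤ C₂ * (ε / (C₁ + C₂ + 1)) := mul_le_mul_of_nonneg_left hdxe hC₂0
  have h3' : (C₁ + C₂) * (ε / (C₁ + C₂ + 1)) < ε := by
    rw [mul_div_assoc', div_lt_iff₀ hden]
    nlinarith
  nlinarith
lemma aux_mu_cont {d : ℕ} {m Λ ρ : ℝ} {a M : ℝ → ℝ} {H : Euc d → Euc d → ℝ}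
    (hm : 1 < m) (hΛ : 0 < Λ) (hρ : 0 < ρ)
    (haM : ∀ r : ℝ, 0 < r → a r ∈ Ioc (0:ℝ) 1 ∧ 1 ≤ M r)
    (hgr : ∀ r : ℝ, 0 < r → ∀ x ∈ ball (0:Euc d) r, ∀ p : Euc d,
        a r * ‖p‖ ^ m - M r ≤ H x p ∧ H x p ≤ Λ * (‖p‖ ^ m + 1))
    (hlip : ∀ r : ℝ, 0 < r → ∀ x ∈ ball (0:Euc d) r, ∀ y ∈ ball (0:Euc d) r,
        ∀ p : Euc d, |H x p - H y p| ≤ (Λ * ‖p‖ ^ m + M r) * ‖x - y‖)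
    (q₀ : Euc d) (hq₀ : ‖q₀‖ = ρ) :
    Continuous (fun x : Euc d => ⨅ q : { q : Euc d // ρ ≤ ‖q‖ }, H x (q : Euc d)) := by
  haveI : Nonempty { q : Euc d // ρ ≤ ‖q‖ } := ⟨⟨q₀, hq₀.ge⟩⟩
  set μ : Euc d → ℝ := fun x => ⨅ q : { q : Euc d // ρ ≤ ‖q‖ }, H x (q : Euc d) with hμ
  have hbdd : ∀ x : Euc d, BddBelow (range fun q : { q : Euc d // ρ ≤ ‖q‖ } => H x (q : Euc d)) := by
    intro x
    refine ⟨-M (‖x‖ + 1), ?_⟩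
    rintro v ⟨q, rfl⟩
    have hr : (0:ℝ) < ‖x‖ + 1 := by positivity
    have hxb : x ∈ ball (0 : Euc d) (‖x‖ + 1) := mem_ball_zero_iff.mpr (by linarith)
    have h := (hgr _ hr x hxb q).1
    have h2 : 0 ≤ a (‖x‖ + 1) * ‖(q : Euc d)‖ ^ m :=
      mul_nonneg (haM _ hr).1.1.le (Real.rpow_nonneg (norm_nonneg _) m)
    linarith
  have hub : ∀ x : Euc d, μ x ≤ Λ * (ρ ^ m + 1) := by
    intro x
    refine le_trans (ciInf_le (hbdd x) ⟨q₀, hq₀.ge⟩) ?_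
    have hr : (0:ℝ) < ‖x‖ + 1 := by positivity
    have hxb : x ∈ ball (0 : Euc d) (‖x‖ + 1) := mem_ball_zero_iff.mpr (by linarith)
    have h := (hgr _ hr x hxb q₀).2
    rwa [hq₀] at h
  rw [continuous_iff_continuousAt]
  intro x₀
  rw [Metric.continuousAt_iff]
  intro ε hε
  set r : ℝ := ‖x₀‖ + 2 with hr_def
  have hr : 0 < r := by positivity
  obtain ⟨ha_pos, hM1⟩ := haM r hr
  set R : ℝ := ρ + (M r + Λ * (ρ ^ m + 1) + 1) / a r + 1 with hR_def
  have hdiv0 : 0 ≤ (M r + Λ * (ρ ^ m + 1) + 1) / a r := by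
    apply div_nonneg _ ha_pos.1.le
    have : 0 ≤ Λ * (ρ ^ m + 1) := by positivity
    linarith
  have hR1 : 1 ≤ R := by simp only [hR_def]; linarith
  have hRρ : ρ ≤ R := by simp only [hR_def]; linarith
  have hRm : M r + Λ * (ρ ^ m + 1) ≤ a r * R ^ m := by
    have h1 : R ≤ R ^ m := by
      calc R = R ^ (1:ℝ) := (Real.rpow_one R).symm
        _ ≤ R ^ m := Real.rpow_le_rpow_of_exponent_le hR1 hm.le
    have h2 : a r * ((M r + Λ * (ρ ^ m + 1) + 1) / a r) = M r + Λ * (ρ ^ m + 1) + 1 :=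
      mul_div_cancel₀ _ (ne_of_gt ha_pos.1)
    have h3 : M r + Λ * (ρ ^ m + 1) + 1 ≤ a r * R := by
      simp only [hR_def]
      nlinarith [ha_pos.1, hρ]
    nlinarith [ha_pos.1]
  set C : ℝ := Λ * R ^ m + M r with hC_def
  have hRm0 : (0:ℝ) ≤ R ^ m := Real.rpow_nonneg (by linarith) m
  have hC0 : 0 < C := by simp only [hC_def]; nlinarith
  have key : ∀ x ∈ ball (0 : Euc d) r, ∀ y ∈ ball (0 : Euc d) r,
      μ x ≤ μ y + C * ‖x - y‖ := by
    intro x hx y hy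
    have hmain : μ x - C * ‖x - y‖ ≤ μ y := by
      apply le_ciInf
      intro q
      by_cases hq : ‖(q : Euc d)‖ ≤ R
      · have h1 : μ x ≤ H x q := ciInf_le (hbdd x) q
        have h2 := hlip r hr x hx y hy q
        have h3 : Λ * ‖(q : Euc d)‖ ^ m + M r ≤ C := by
          have h4 : ‖(q : Euc d)‖ ^ m ≤ R ^ m :=
            Real.rpow_le_rpow (norm_nonneg _) hq (by linarith)
          simp only [hC_def]
          nlinarith
        have h4 : |H x q - H y q| ≤ C * ‖x - y‖ :=
          le_trans h2 (mul_le_mul_of_nonneg_right h3 (norm_nonneg _))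
        have h5 := (abs_le.mp h4).2
        linarith
      · push_neg at hq
        have h1 := (hgr r hr y hy q).1
        have h2 : R ^ m ≤ ‖(q : Euc d)‖ ^ m :=
          Real.rpow_le_rpow (by linarith) hq.le (by linarith)
        have h3 : Λ * (ρ ^ m + 1) ≤ H y q := by nlinarith [ha_pos.1.le]
        have h4 := hub x
        have h5 : 0 ≤ C * ‖x - y‖ := mul_nonneg hC0.le (norm_nonneg _)
        linarith
    linarith
  refine ⟨min 1 (ε / (C + 1)), lt_min one_pos (by positivity), ?_⟩
  intro y hyd
  have hd1 : dist y x₀ < 1 := lt_of_lt_of_le hyd (min_le_left _ _)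
  have hd2 : dist y x₀ ≤ ε / (C + 1) := le_of_lt (lt_of_lt_of_le hyd (min_le_right _ _))
  rw [dist_eq_norm] at hd1 hd2
  have hyball : y ∈ ball (0 : Euc d) r := by
    rw [mem_ball_zero_iff]
    have := norm_sub_norm_le y x₀
    simp only [hr_def]; linarith
  have hx₀ball : x₀ ∈ ball (0 : Euc d) r := mem_ball_zero_iff.mpr (by simp only [hr_def]; linarith)
  have e1 := key y hyball x₀ hx₀ball
  have e2 := key x₀ hx₀ball y hyball
  rw [norm_sub_rev] at e2
  rw [Real.dist_eq]
  have habs : |μ y - μ x₀| ≤ C * ‖y - x₀‖ := abs_le.mpr ⟨by linarith, by linarith⟩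
  have hfin : C * ‖y - x₀‖ < ε := by
    have : C * ‖y - x₀‖ ≤ C * (ε / (C + 1)) :=
      mul_le_mul_of_nonneg_left hd2 hC0.le
    have h7 : C * (ε / (C + 1)) < ε := by
      rw [mul_div_assoc', div_lt_iff₀ (by linarith : (0:ℝ) < C + 1)]
      nlinarith
    exact lt_of_le_of_lt this h7
  linarith [abs_le.mp habs]
lemma aux_key_ineq {d : ℕ} {m ρ : ℝ} (hm : 1 < m) (p₀ p : Euc d) (hp₀ : ‖p₀‖ ≤ ρ)
    (hρ : 0 < ρ) :
    (‖p‖ + ‖p₀‖ + 1) ^ (m - 1) * ‖p - p₀‖ ≤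
      (‖p - p₀‖ + (2 * ρ + 1)) ^ (m + 1) - (2 * ρ + 1) ^ (m + 1) := by
  set s : ℝ := ‖p - p₀‖ with hs_def
  set b : ℝ := 2 * ρ + 1 with hb_def
  have hs0 : 0 ≤ s := norm_nonneg _
  have hb1 : 1 ≤ b := by simp only [hb_def]; linarith
  have h1 : ‖p‖ + ‖p₀‖ + 1 ≤ s + b := by
    have h2 : ‖p‖ - ‖p₀‖ ≤ ‖p - p₀‖ := norm_sub_norm_le p p₀
    simp only [hs_def, hb_def]
    linarith
  have hsb1 : 1 ≤ s + b := by linarith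
  have h2 : (‖p‖ + ‖p₀‖ + 1) ^ (m - 1) ≤ (s + b) ^ (m - 1) :=
    Real.rpow_le_rpow (by positivity) h1 (by linarith)
  have h3 : (s + b) ^ (m - 1) ≤ (s + b) ^ m :=
    Real.rpow_le_rpow_of_exponent_le hsb1 (by linarith)
  have h4 : b ^ (m + 1) ≤ (s + b) ^ m * b := by
    rw [Real.rpow_add_one (by linarith : b ≠ 0)]
    exact mul_le_mul_of_nonneg_right
      (Real.rpow_le_rpow (by linarith) (by linarith) (by linarith)) (by linarith)
  have h5 : (s + b) ^ (m + 1) = (s + b) ^ m * (s + b) :=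
    Real.rpow_add_one (by linarith : s + b ≠ 0) m
  have h6 : 0 ≤ (s + b) ^ m := Real.rpow_nonneg (by linarith) m
  have h7 : 0 ≤ (‖p‖ + ‖p₀‖ + 1) ^ (m - 1) := Real.rpow_nonneg (by positivity) _
  calc (‖p‖ + ‖p₀‖ + 1) ^ (m - 1) * s ≤ (s + b) ^ (m - 1) * s :=
        mul_le_mul_of_nonneg_right h2 hs0
    _ ≤ (s + b) ^ m * s := mul_le_mul_of_nonneg_right h3 hs0
    _ ≤ (s + b) ^ (m + 1) - b ^ (m + 1) := by rw [h5]; nlinarith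

end helpers


noncomputable def GfunAux (d : ℕ) (H : Euc d → Euc d → ℝ) (ρ : ℝ) : Euc d → Euc d → ℝ :=
  fun x p => max (H x p) (⨅ q : { q : Euc d // ρ ≤ ‖q‖ }, H x (q : Euc d))

noncomputable def FfunAux (d : ℕ) (H : Euc d → Euc d → ℝ) (ρ Λ m : ℝ) (p₀ : Euc d) :
    Euc d → Euc d → ℝ :=
  fun x p => H x p₀ + Λ * ((‖p - p₀‖ + (2 * ρ + 1)) ^ (m + 1) - (2 * ρ + 1) ^ (m + 1))


set_option maxHeartbeats 2000000 in
/-- **Infimum representation for semiconcave-type Hamiltonians** (Example `ex 2`): if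
`H ∈ ℋ(m,Λ,(a_r),(M_r))`, `K ∈ 𝔅(ℓ,Λ,(a_r),(M_r))` with `ℓ ≥ m`, `H(x,·) - K(x,·)` is
concave on `B_ρ` and `p ↦ max{H(x,p), μ(x)}` is convex, where
`μ(x) = inf_{|p| ≥ ρ} H(x,p)`, then `H` can be written as the pointwise infimum of a
family of functions belonging to classes `𝔅(m_i,Λ̃,(ã_r),(M̃_r))`. -/
theorem statement17 (d : ℕ) (hd : 0 < d) (m Λ : ℝ) (hm : 1 < m) (hΛ : 0 < Λ)
    (a M : ℝ → ℝ) (haM : GoodFamilies a M)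
    (H : Euc d → Euc d → ℝ) (hH : MemH d m Λ a M H)
    (ρ ℓ : ℝ) (hρ : 0 < ρ) (hℓ : m ≤ ℓ)
    (K : Euc d → Euc d → ℝ) (hK : MemB d ℓ Λ a M K)
    (hconc : ∀ x : Euc d, ConcaveOn ℝ (ball (0 : Euc d) ρ) (fun p => H x p - K x p))
    (hconv : ∀ x : Euc d, ConvexOn ℝ univ
      (fun p => max (H x p) (⨅ q : { q : Euc d // ρ ≤ ‖q‖ }, H x (q : Euc d)))) :
    ∃ Λ' : ℝ, 0 < Λ' ∧ ∃ a' M' : ℝ → ℝ, GoodFamilies a' M' ∧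
    ∃ I : Type, Nonempty I ∧ ∃ mi : I → ℝ, ∃ Hi : I → Euc d → Euc d → ℝ,
      (∀ i, 1 < mi i ∧ MemB d (mi i) Λ' a' M' (Hi i)) ∧
      ∀ x p : Euc d, H x p = ⨅ i, Hi i x p := by
  classical
  obtain ⟨h3, h4⟩ := hH
  have hgr : ∀ r : ℝ, 0 < r → ∀ x ∈ ball (0:Euc d) r, ∀ p : Euc d,
      a r * ‖p‖ ^ m - M r ≤ H x p ∧ H x p ≤ Λ * (‖p‖ ^ m + 1) := fun r hr => (h4 r hr).1
  have hlip : ∀ r : ℝ, 0 < r → ∀ x ∈ ball (0:Euc d) r, ∀ y ∈ ball (0:Euc d) r,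
      ∀ p : Euc d, |H x p - H y p| ≤ (Λ * ‖p‖ ^ m + M r) * ‖x - y‖ := fun r hr => (h4 r hr).2
  -- a point of norm ρ
  set q₀ : Euc d := EuclideanSpace.single (⟨0, hd⟩ : Fin d) ρ with hq₀def
  have hq₀ : ‖q₀‖ = ρ := by
    rw [hq₀def, EuclideanSpace.norm_single]
    exact abs_of_pos hρ
  haveI hne : Nonempty { q : Euc d // ρ ≤ ‖q‖ } := ⟨⟨q₀, hq₀.ge⟩⟩
  set μ : Euc d → ℝ := fun x => ⨅ q : { q : Euc d // ρ ≤ ‖q‖ }, H x (q : Euc d) with hμdef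
  -- basic facts about μ
  have hbdd : ∀ x : Euc d,
      BddBelow (range fun q : { q : Euc d // ρ ≤ ‖q‖ } => H x (q : Euc d)) := by
    intro x
    refine ⟨-M (‖x‖ + 1), ?_⟩
    rintro v ⟨q, rfl⟩
    have hr : (0:ℝ) < ‖x‖ + 1 := by positivity
    have hxb : x ∈ ball (0 : Euc d) (‖x‖ + 1) := mem_ball_zero_iff.mpr (by linarith)
    have h := (hgr _ hr x hxb q).1
    have h2 : 0 ≤ a (‖x‖ + 1) * ‖(q : Euc d)‖ ^ m :=
      mul_nonneg (haM _ hr).1.1.le (Real.rpow_nonneg (norm_nonneg _) m)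
    linarith
  have hHub : ∀ x p : Euc d, H x p ≤ Λ * (‖p‖ ^ m + 1) := by
    intro x p
    have hr : (0:ℝ) < ‖x‖ + 1 := by positivity
    exact (hgr _ hr x (mem_ball_zero_iff.mpr (by linarith)) p).2
  have hμub : ∀ x : Euc d, μ x ≤ Λ * (ρ ^ m + 1) := by
    intro x
    refine le_trans (ciInf_le (hbdd x) ⟨q₀, hq₀.ge⟩) ?_
    have h := hHub x q₀
    rwa [hq₀] at h
  have hμle : ∀ x p : Euc d, ρ ≤ ‖p‖ → μ x ≤ H x p := fun x p hp => ciInf_le (hbdd x) ⟨p, hp⟩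
  -- constants
  have hρm0 : (0:ℝ) ≤ ρ ^ m := Real.rpow_nonneg hρ.le m
  have hb1 : (1:ℝ) ≤ 2 * ρ + 1 := by linarith
  have hb0 : (0:ℝ) < 2 * ρ + 1 := by linarith
  have hbig1 : (1:ℝ) ≤ (6 * ρ + 2) ^ (m + 2) := by
    calc (1:ℝ) = 1 ^ (m + 2) := (Real.one_rpow _).symm
      _ ≤ (6 * ρ + 2) ^ (m + 2) := Real.rpow_le_rpow (by norm_num) (by linarith) (by linarith)
  have h3ρm : (3 * ρ + 1) ^ m ≤ (6 * ρ + 2) ^ (m + 2) := by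
    calc (3 * ρ + 1) ^ m ≤ (6 * ρ + 2) ^ m :=
          Real.rpow_le_rpow (by linarith) (by linarith) (by linarith)
      _ ≤ (6 * ρ + 2) ^ (m + 2) :=
          Real.rpow_le_rpow_of_exponent_le (by linarith) (by linarith)
  have h6ρm : (6 * ρ + 2) ^ (m + 1) ≤ (6 * ρ + 2) ^ (m + 2) :=
    Real.rpow_le_rpow_of_exponent_le (by linarith) (by linarith)
  have h6ρ0 : (0:ℝ) ≤ (6 * ρ + 2) ^ (m + 1) := Real.rpow_nonneg (by linarith) _
  have h3ρ0 : (0:ℝ) ≤ (3 * ρ + 1) ^ m := Real.rpow_nonneg (by linarith) _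
  set Λ' : ℝ := Λ * (m + 2) * ((6 * ρ + 2) ^ (m + 2) + ρ ^ m + 2) with hΛ'def
  have hΛ'pos : 0 < Λ' := by
    have : (0:ℝ) < (6 * ρ + 2) ^ (m + 2) + ρ ^ m + 2 := by linarith
    have hm2 : (0:ℝ) < m + 2 := by linarith
    positivity
  have hbr0 : (0:ℝ) ≤ (6 * ρ + 2) ^ (m + 2) + ρ ^ m + 2 := by linarith
  have hmul3 : 3 * ((6 * ρ + 2) ^ (m + 2) + ρ ^ m + 2) ≤
      (m + 2) * ((6 * ρ + 2) ^ (m + 2) + ρ ^ m + 2) :=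
    mul_le_mul_of_nonneg_right (by linarith) hbr0
  have hB1 : Λ ≤ Λ' := by
    have h1 : (1:ℝ) ≤ (m + 2) * ((6 * ρ + 2) ^ (m + 2) + ρ ^ m + 2) := by linarith
    calc Λ = Λ * 1 := by ring
      _ ≤ Λ * ((m + 2) * ((6 * ρ + 2) ^ (m + 2) + ρ ^ m + 2)) :=
          mul_le_mul_of_nonneg_left h1 hΛ.le
      _ = Λ' := by rw [hΛ'def]; ring
  have hB2 : Λ * (ρ ^ m + 1) ≤ Λ' := by
    have h1 : ρ ^ m + 1 ≤ (m + 2) * ((6 * ρ + 2) ^ (m + 2) + ρ ^ m + 2) := by linarith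
    calc Λ * (ρ ^ m + 1)
        ≤ Λ * ((m + 2) * ((6 * ρ + 2) ^ (m + 2) + ρ ^ m + 2)) :=
          mul_le_mul_of_nonneg_left h1 hΛ.le
      _ = Λ' := by rw [hΛ'def]; ring
  have hB3 : Λ * ((m + 1) * (3 * ρ + 1) ^ m) ≤ Λ' := by
    have h1 : (m + 1) * (3 * ρ + 1) ^ m ≤
        (m + 2) * ((6 * ρ + 2) ^ (m + 2) + ρ ^ m + 2) :=
      mul_le_mul (by linarith) (by linarith) h3ρ0 (by linarith)
    calc Λ * ((m + 1) * (3 * ρ + 1) ^ m)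
        ≤ Λ * ((m + 2) * ((6 * ρ + 2) ^ (m + 2) + ρ ^ m + 2)) :=
          mul_le_mul_of_nonneg_left h1 hΛ.le
      _ = Λ' := by rw [hΛ'def]; ring
  have hB4 : Λ * (ρ ^ m + 1) + Λ * (6 * ρ + 2) ^ (m + 1) ≤ Λ' := by
    have h1 : (ρ ^ m + 1) + (6 * ρ + 2) ^ (m + 1) ≤
        (m + 2) * ((6 * ρ + 2) ^ (m + 2) + ρ ^ m + 2) := by linarith
    calc Λ * (ρ ^ m + 1) + Λ * (6 * ρ + 2) ^ (m + 1)
        = Λ * ((ρ ^ m + 1) + (6 * ρ + 2) ^ (m + 1)) := by ring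
      _ ≤ Λ * ((m + 2) * ((6 * ρ + 2) ^ (m + 2) + ρ ^ m + 2)) :=
          mul_le_mul_of_nonneg_left h1 hΛ.le
      _ = Λ' := by rw [hΛ'def]; ring
  set a' : ℝ → ℝ := fun r => min (a r) (min Λ 1) with ha'def
  set M' : ℝ → ℝ := fun r => M r + Λ * (2 * ρ + 1) ^ (m + 1) with hM'def
  have hb'm0 : (0:ℝ) ≤ (2 * ρ + 1) ^ (m + 1) := Real.rpow_nonneg hb0.le _
  have hgood : GoodFamilies a' M' := by
    intro r hr
    obtain ⟨⟨ha0, ha1⟩, hM1⟩ := haM r hr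
    refine ⟨⟨lt_min ha0 (lt_min hΛ one_pos),
      le_trans (min_le_right _ _) (min_le_right _ _)⟩, ?_⟩
    simp only [hM'def]
    nlinarith
  -- continuity
  have hHcont : Continuous (fun q : Euc d × Euc d => H q.1 q.2) :=
    aux_H_cont hm hΛ h3 hlip (fun r hr => (haM r hr).2)
  have hμcont : Continuous μ := aux_mu_cont hm hΛ hρ haM hgr hlip q₀ hq₀
  -- membership of G = max(H, μ) in the class with exponent m
  have hGmem : MemB d m Λ' a' M' (GfunAux d H ρ) := by
    refine ⟨?_, ?_, ?_, ?_⟩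
    · exact (hHcont.max (hμcont.comp continuous_fst)).measurable
    · intro x
      exact hconv x
    · intro x p q
      show |max (H x p) (μ x) - max (H x q) (μ x)| ≤ _
      refine le_trans (abs_max_sub_max_le_abs _ _ _) (le_trans (h3 x p q) ?_)
      have h0 : (0:ℝ) ≤ (‖p‖ + ‖q‖ + 1) ^ (m - 1) := Real.rpow_nonneg (by positivity) _
      exact mul_le_mul_of_nonneg_right
        (mul_le_mul_of_nonneg_right hB1 h0) (norm_nonneg _)
    · intro r hr x hx p
      obtain ⟨hl, hu⟩ := hgr r hr x hx p
      constructor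
      · show _ ≤ max (H x p) (μ x)
        have ha' : a' r ≤ a r := min_le_left _ _
        have h1 : a' r * ‖p‖ ^ m ≤ a r * ‖p‖ ^ m :=
          mul_le_mul_of_nonneg_right ha' (Real.rpow_nonneg (norm_nonneg p) m)
        have h2 : M r ≤ M' r := by simp only [hM'def]; nlinarith
        exact le_trans (by linarith) (le_max_left _ _)
      · show max (H x p) (μ x) ≤ _
        have hpm0 : (0:ℝ) ≤ ‖p‖ ^ m := Real.rpow_nonneg (norm_nonneg p) m
        refine max_le (le_trans hu ?_) (le_trans (hμub x) ?_)
        · exact mul_le_mul_of_nonneg_right hB1 (by linarith)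
        · nlinarith
  -- membership of the translated-power functions in the class with exponent m+1
  have hz1 : (1:ℝ) ≤ m + 1 := by linarith
  have hFmem : ∀ p₀ : Euc d, ‖p₀‖ ≤ ρ → MemB d (m + 1) Λ' a' M' (FfunAux d H ρ Λ m p₀) := by
    intro p₀ hp₀
    refine ⟨?_, ?_, ?_, ?_⟩
    · -- measurability
      apply Continuous.measurable
      have c1 : Continuous fun x : Euc d => H x p₀ :=
        hHcont.comp (continuous_id.prodMk continuous_const)
      have c2 : Continuous fun q : Euc d × Euc d =>
          (‖q.2 - p₀‖ + (2 * ρ + 1)) ^ (m + 1) := by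
        refine Continuous.rpow_const ?_ (fun x => Or.inr (by linarith))
        exact ((continuous_snd.sub continuous_const).norm).add continuous_const
      exact (c1.comp continuous_fst).add (continuous_const.mul (c2.sub continuous_const))
    · -- convexity in p
      intro x
      show ConvexOn ℝ univ fun p : Euc d =>
        H x p₀ + Λ * ((‖p - p₀‖ + (2 * ρ + 1)) ^ (m + 1) - (2 * ρ + 1) ^ (m + 1))
      have base := aux_convexOn_norm_rpow (d := d) p₀ (2 * ρ + 1) (m + 1) (by linarith) hz1
      have h1 := (base.smul hΛ.le).add_const (H x p₀ - Λ * (2 * ρ + 1) ^ (m + 1))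
      have heq : (fun p : Euc d => H x p₀ +
          Λ * ((‖p - p₀‖ + (2 * ρ + 1)) ^ (m + 1) - (2 * ρ + 1) ^ (m + 1)))
          = fun p : Euc d =>
            Λ • (‖p - p₀‖ + (2 * ρ + 1)) ^ (m + 1) +
              (H x p₀ - Λ * (2 * ρ + 1) ^ (m + 1)) := by
        funext p
        simp only [smul_eq_mul]
        ring
      rw [heq]
      exact h1
    · -- (H3)
      intro x p q
      show |(H x p₀ + Λ * ((‖p - p₀‖ + (2*ρ+1)) ^ (m+1) - (2*ρ+1) ^ (m+1)))
          - (H x p₀ + Λ * ((‖q - p₀‖ + (2*ρ+1)) ^ (m+1) - (2*ρ+1) ^ (m+1)))|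
          ≤ Λ' * (‖p‖ + ‖q‖ + 1) ^ (m + 1 - 1) * ‖p - q‖
      simp only [add_sub_cancel_right]
      have claim : ∀ u v : Euc d,
          (H x p₀ + Λ * ((‖u - p₀‖ + (2*ρ+1)) ^ (m+1) - (2*ρ+1) ^ (m+1)))
          - (H x p₀ + Λ * ((‖v - p₀‖ + (2*ρ+1)) ^ (m+1) - (2*ρ+1) ^ (m+1)))
          ≤ Λ' * (‖u‖ + ‖v‖ + 1) ^ m * ‖u - v‖ := by
        intro u v
        set A : ℝ := ‖u - p₀‖ + (2*ρ+1) with hA_def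
        set B : ℝ := ‖v - p₀‖ + (2*ρ+1) with hB_def
        have hA1 : 1 ≤ A := by
          simp only [hA_def]; have := norm_nonneg (u - p₀); linarith
        have hBpos : (0:ℝ) < B := by
          simp only [hB_def]; have := norm_nonneg (v - p₀); linarith
        have hlhs : (H x p₀ + Λ * (A ^ (m+1) - (2*ρ+1) ^ (m+1)))
            - (H x p₀ + Λ * (B ^ (m+1) - (2*ρ+1) ^ (m+1)))
            = Λ * (A ^ (m+1) - B ^ (m+1)) := by ring
        rw [hlhs]
        have hrhs0 : (0:ℝ) ≤ Λ' * (‖u‖ + ‖v‖ + 1) ^ m * ‖u - v‖ := by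
          have h01 := Real.rpow_nonneg (show (0:ℝ) ≤ ‖u‖ + ‖v‖ + 1 by positivity) m
          have h02 := norm_nonneg (u - v)
          positivity
        by_cases hAB : A ≤ B
        · have : A ^ (m+1) ≤ B ^ (m+1) := Real.rpow_le_rpow (by linarith) hAB (by linarith)
          nlinarith
        · push_neg at hAB
          have h1 := aux_rpow_sub_rpow_le hBpos hAB.le hz1
          rw [add_sub_cancel_right] at h1
          have hABle : A - B ≤ ‖u - v‖ := by
            have h2 : ‖u - p₀‖ - ‖v - p₀‖ ≤ ‖(u - p₀) - (v - p₀)‖ := norm_sub_norm_le _ _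
            rw [sub_sub_sub_cancel_right] at h2
            simp only [hA_def, hB_def]
            linarith
          have hAm : A ^ m ≤ (3*ρ+1) ^ m * (‖u‖ + ‖v‖ + 1) ^ m := by
            have hA2 : A ≤ (3*ρ+1) * (‖u‖ + ‖v‖ + 1) := by
              have h5 : ‖u - p₀‖ ≤ ‖u‖ + ρ := by
                have := norm_sub_le u p₀
                linarith
              simp only [hA_def]
              nlinarith [norm_nonneg u, norm_nonneg v, hρ]
            calc A ^ m ≤ ((3*ρ+1) * (‖u‖ + ‖v‖ + 1)) ^ m :=
                  Real.rpow_le_rpow (by linarith) hA2 (by linarith)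
              _ = (3*ρ+1) ^ m * (‖u‖ + ‖v‖ + 1) ^ m :=
                  Real.mul_rpow (by linarith) (by positivity)
          have hX0 : (0:ℝ) ≤ (‖u‖ + ‖v‖ + 1) ^ m := Real.rpow_nonneg (by positivity) m
          have hAm0 : (0:ℝ) ≤ A ^ m := Real.rpow_nonneg (by linarith) m
          have e2 : A ^ m * (A - B) ≤ ((3*ρ+1) ^ m * (‖u‖ + ‖v‖ + 1) ^ m) * ‖u - v‖ :=
            mul_le_mul hAm hABle (by linarith) (by positivity)
          have e3 : Λ * (A ^ (m+1) - B ^ (m+1)) ≤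
              Λ * ((m+1) * (((3*ρ+1) ^ m * (‖u‖ + ‖v‖ + 1) ^ m) * ‖u - v‖)) := by
            have e1 : A ^ (m+1) - B ^ (m+1) ≤
                (m+1) * (((3*ρ+1) ^ m * (‖u‖ + ‖v‖ + 1) ^ m) * ‖u - v‖) := by
              nlinarith [h1, e2]
            exact mul_le_mul_of_nonneg_left e1 hΛ.le
          have e4 : Λ * ((m+1) * (((3*ρ+1) ^ m * (‖u‖ + ‖v‖ + 1) ^ m) * ‖u - v‖))
              = (Λ * ((m+1) * (3*ρ+1) ^ m)) * ((‖u‖ + ‖v‖ + 1) ^ m * ‖u - v‖) := by ring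
          have e5 : (Λ * ((m+1) * (3*ρ+1) ^ m)) * ((‖u‖ + ‖v‖ + 1) ^ m * ‖u - v‖)
              ≤ Λ' * ((‖u‖ + ‖v‖ + 1) ^ m * ‖u - v‖) :=
            mul_le_mul_of_nonneg_right hB3 (by positivity)
          calc Λ * (A ^ (m+1) - B ^ (m+1))
              ≤ (Λ * ((m+1) * (3*ρ+1) ^ m)) * ((‖u‖ + ‖v‖ + 1) ^ m * ‖u - v‖) := by
                rw [← e4]; exact e3
            _ ≤ Λ' * ((‖u‖ + ‖v‖ + 1) ^ m * ‖u - v‖) := e5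
            _ = Λ' * (‖u‖ + ‖v‖ + 1) ^ m * ‖u - v‖ := by ring
      have h2 := claim q p
      have hXc : ‖q‖ + ‖p‖ + 1 = ‖p‖ + ‖q‖ + 1 := by ring
      rw [hXc, norm_sub_rev q p] at h2
      exact abs_sub_le_iff.mpr ⟨claim p q, h2⟩
    · -- growth
      intro r hr x hx p
      have hs0 : 0 ≤ ‖p - p₀‖ := norm_nonneg _
      obtain ⟨hl₀, hu₀⟩ := hgr r hr x hx p₀
      have hMr1 : 1 ≤ M r := (haM r hr).2
      have ha0 : 0 < a r := (haM r hr).1.1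
      have hHl : -M r ≤ H x p₀ := by
        have h2 : 0 ≤ a r * ‖p₀‖ ^ m :=
          mul_nonneg ha0.le (Real.rpow_nonneg (norm_nonneg _) m)
        linarith
      have hHu : H x p₀ ≤ Λ * (ρ ^ m + 1) := by
        have h2 : ‖p₀‖ ^ m ≤ ρ ^ m :=
          Real.rpow_le_rpow (norm_nonneg _) hp₀ (by linarith)
        nlinarith
      constructor
      · -- lower bound
        show _ ≤ H x p₀ + Λ * ((‖p - p₀‖ + (2*ρ+1)) ^ (m+1) - (2*ρ+1) ^ (m+1))
        have h1 : ‖p‖ ≤ ‖p - p₀‖ + (2*ρ+1) := by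
          have h2 : ‖p‖ - ‖p₀‖ ≤ ‖p - p₀‖ := norm_sub_norm_le _ _
          linarith
        have h2 : ‖p‖ ^ (m+1) ≤ (‖p - p₀‖ + (2*ρ+1)) ^ (m+1) :=
          Real.rpow_le_rpow (norm_nonneg p) h1 (by linarith)
        have h3' : a' r ≤ Λ := le_trans (min_le_right _ _) (min_le_left _ _)
        have h4' : a' r * ‖p‖ ^ (m+1) ≤ Λ * (‖p - p₀‖ + (2*ρ+1)) ^ (m+1) :=
          mul_le_mul h3' h2 (Real.rpow_nonneg (norm_nonneg p) _) hΛ.le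
        simp only [hM'def]
        linarith
      · -- upper bound
        show H x p₀ + Λ * ((‖p - p₀‖ + (2*ρ+1)) ^ (m+1) - (2*ρ+1) ^ (m+1)) ≤ _
        have h5 : ‖p - p₀‖ + (2*ρ+1) ≤ (3*ρ+1) * (‖p‖ + 1) := by
          have h6 : ‖p - p₀‖ ≤ ‖p‖ + ρ := by
            have := norm_sub_le p p₀
            linarith
          nlinarith [norm_nonneg p, hρ]
        have h6 : (‖p - p₀‖ + (2*ρ+1)) ^ (m+1) ≤ (3*ρ+1) ^ (m+1) * (‖p‖ + 1) ^ (m+1) := by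
          calc (‖p - p₀‖ + (2*ρ+1)) ^ (m+1) ≤ ((3*ρ+1) * (‖p‖ + 1)) ^ (m+1) :=
                Real.rpow_le_rpow (by linarith) h5 (by linarith)
            _ = (3*ρ+1) ^ (m+1) * (‖p‖ + 1) ^ (m+1) :=
                Real.mul_rpow (by linarith) (by positivity)
        have h7 : (‖p‖ + 1) ^ (m+1) ≤ 2 ^ (m+1) * (‖p‖ ^ (m+1) + 1) :=
          aux_add_one_rpow (norm_nonneg p) (by linarith)
        have h8 : (3*ρ+1) ^ (m+1) * 2 ^ (m+1) = (6*ρ+2) ^ (m+1) := by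
          rw [← Real.mul_rpow (by linarith) (by norm_num)]
          ring_nf
        have h9 : (‖p - p₀‖ + (2*ρ+1)) ^ (m+1) ≤ (6*ρ+2) ^ (m+1) * (‖p‖ ^ (m+1) + 1) := by
          have h3ρ1 : (0:ℝ) ≤ (3*ρ+1) ^ (m+1) := Real.rpow_nonneg (by linarith) _
          calc (‖p - p₀‖ + (2*ρ+1)) ^ (m+1)
              ≤ (3*ρ+1) ^ (m+1) * (‖p‖ + 1) ^ (m+1) := h6
            _ ≤ (3*ρ+1) ^ (m+1) * (2 ^ (m+1) * (‖p‖ ^ (m+1) + 1)) :=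
                mul_le_mul_of_nonneg_left h7 h3ρ1
            _ = (6*ρ+2) ^ (m+1) * (‖p‖ ^ (m+1) + 1) := by rw [← h8]; ring
        have hY0 : (0:ℝ) ≤ ‖p‖ ^ (m+1) := Real.rpow_nonneg (norm_nonneg p) _
        have h10 : Λ * (‖p - p₀‖ + (2*ρ+1)) ^ (m+1) ≤
            Λ * (6*ρ+2) ^ (m+1) * (‖p‖ ^ (m+1) + 1) := by
          have := mul_le_mul_of_nonneg_left h9 hΛ.le
          nlinarith [this]
        have h11 : Λ * (ρ ^ m + 1) * (‖p‖ ^ (m+1) + 1) +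
            Λ * (6*ρ+2) ^ (m+1) * (‖p‖ ^ (m+1) + 1) ≤ Λ' * (‖p‖ ^ (m+1) + 1) := by
          have h12 := mul_le_mul_of_nonneg_right hB4
            (show (0:ℝ) ≤ ‖p‖ ^ (m+1) + 1 by linarith)
          nlinarith [h12]
        have hn1 : 0 ≤ Λ * ρ ^ m * ‖p‖ ^ (m+1) := by positivity
        have hn2 : 0 ≤ Λ * ‖p‖ ^ (m+1) := by positivity
        have hn3 : 0 ≤ Λ * (2*ρ+1) ^ (m+1) := by positivity
        linarith [hHu, h10, h11, hn1, hn2, hn3]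
  -- the family and the infimum representation
  refine ⟨Λ', hΛ'pos, a', M', hgood, Sum Unit { p₀ : Euc d // ‖p₀‖ ≤ ρ }, ⟨Sum.inl ()⟩,
    Sum.elim (fun _ => m) (fun _ => m + 1),
    Sum.elim (fun _ => GfunAux d H ρ) (fun p₀ => FfunAux d H ρ Λ m (p₀ : Euc d)),
    ?_, ?_⟩
  · rintro (_ | ⟨p₀, hp₀⟩)
    · exact ⟨hm, hGmem⟩
    · exact ⟨show (1:ℝ) < m + 1 by linarith, hFmem p₀ hp₀⟩
  · intro x p
    have hGge : H x p ≤ GfunAux d H ρ x p := le_max_left _ _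
    have hFge : ∀ p₀ : Euc d, ‖p₀‖ ≤ ρ → H x p ≤ FfunAux d H ρ Λ m p₀ x p := by
      intro p₀ hp₀
      show H x p ≤ H x p₀ + Λ * ((‖p - p₀‖ + (2*ρ+1)) ^ (m+1) - (2*ρ+1) ^ (m+1))
      have hk := aux_key_ineq (d := d) hm p₀ p hp₀ hρ
      have h2 : Λ * ((‖p‖ + ‖p₀‖ + 1) ^ (m-1) * ‖p - p₀‖) ≤
          Λ * ((‖p - p₀‖ + (2*ρ+1)) ^ (m+1) - (2*ρ+1) ^ (m+1)) :=
        mul_le_mul_of_nonneg_left hk hΛ.le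
      have h1' : H x p - H x p₀ ≤ Λ * (‖p‖ + ‖p₀‖ + 1) ^ (m-1) * ‖p - p₀‖ :=
        le_trans (le_abs_self _) (h3 x p p₀)
      nlinarith
    refine le_antisymm (le_ciInf ?_) ?_
    · rintro (_ | ⟨p₀, hp₀⟩)
      · exact hGge
      · exact hFge p₀ hp₀
    · by_cases hp : ‖p‖ ≤ ρ
      · refine le_trans (ciInf_le ⟨H x p, ?_⟩ (Sum.inr ⟨p, hp⟩)) ?_
        · rintro v ⟨(_ | ⟨p₀, hp₀⟩), rfl⟩
          · exact hGge
          · exact hFge p₀ hp₀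
        · show H x p + Λ * ((‖p - p‖ + (2*ρ+1)) ^ (m+1) - (2*ρ+1) ^ (m+1)) ≤ H x p
          simp
      · push_neg at hp
        refine le_trans (ciInf_le ⟨H x p, ?_⟩ (Sum.inl ())) ?_
        · rintro v ⟨(_ | ⟨p₀, hp₀⟩), rfl⟩
          · exact hGge
          · exact hFge p₀ hp₀
        · show max (H x p) (μ x) ≤ H x p
          exact le_of_eq (max_eq_left (hμle x p hp.le))
end
end
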